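/- Let $D\subset\mathbb{R}^2$ be a bounded, convex, open set with $C^2$ boundary, $\varepsilon>0$, let $v\in C^2(\overline{D})$ with $v>-1$ on $\overline{D}$, and let $\Phi\in C^2(\overline{\Omega})$ with $\Phi=0$ on $\partial\Omega$, where $\Omega=D\times(0,1)$. Define $P_x:=\partial_x\Phi-\eta\tfrac{\partial_x v}{1+v}\partial_\eta\Phi$, $P_y:=\partial_y\Phi-\eta\tfrac{\partial_y v}{1+v}\partial_\eta\Phi$, and $P_\eta:=\tfrac{\partial_\eta\Phi}{1+v}$ on $\Omega$. Then $-\int_\Omega\Phi\,\mathcal{L}_v\Phi\,\mathrm{d}(x,y,\eta)=\varepsilon^2\int_\Omega P_x^2\,\mathrm{d}(x,y,\eta)+\varepsilon^2\int_\Omega P_y^2\,\mathrm{d}(x,y,\eta)+\int_\Omega P_\eta^2\,\mathrm{d}(x,y,\eta)-\varepsilon^2\int_\Omega\Phi\Big[\tfrac{\partial_x v}{1+v}P_x+\tfrac{\partial_y v}{1+v}P_y\Big]\,\mathrm{d}(x,y,\eta)$. -/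

import Mathlib

open Set MeasureTheory

/-- Partial derivative in the first variable of a function on `ℝ × ℝ × ℝ`. -/
noncomputable def dX (f : ℝ × ℝ × ℝ → ℝ) (z : ℝ × ℝ × ℝ) : ℝ :=
  deriv (fun t => f (t, z.2.1, z.2.2)) z.1

/-- Partial derivative in the second variable of a function on `ℝ × ℝ × ℝ`. -/
noncomputable def dY (f : ℝ × ℝ × ℝ → ℝ) (z : ℝ × ℝ × ℝ) : ℝ :=
  deriv (fun t => f (z.1, t, z.2.2)) z.2.1

/-- Partial derivative in the third (vertical) variable of a function on `ℝ × ℝ × ℝ`. -/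
noncomputable def dZ (f : ℝ × ℝ × ℝ → ℝ) (z : ℝ × ℝ × ℝ) : ℝ :=
  deriv (fun t => f (z.1, z.2.1, t)) z.2.2

/-- Partial derivative in the first variable of a function on `ℝ × ℝ`. -/
noncomputable def d1 (v : ℝ × ℝ → ℝ) (q : ℝ × ℝ) : ℝ := deriv (fun t => v (t, q.2)) q.1

/-- Partial derivative in the second variable of a function on `ℝ × ℝ`. -/
noncomputable def d2 (v : ℝ × ℝ → ℝ) (q : ℝ × ℝ) : ℝ := deriv (fun t => v (q.1, t)) q.2

/-- `|∇v|²` for a function on `ℝ × ℝ`. -/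
noncomputable def gradSq (v : ℝ × ℝ → ℝ) (q : ℝ × ℝ) : ℝ := d1 v q ^ 2 + d2 v q ^ 2

/-- The Laplacian `Δv` of a function on `ℝ × ℝ`. -/
noncomputable def lap (v : ℝ × ℝ → ℝ) (q : ℝ × ℝ) : ℝ := d1 (d1 v) q + d2 (d2 v) q

/-- The transformed elliptic operator `𝓛_v` acting on functions on `Ω = D × (0,1)`. -/
noncomputable def Lop (ε : ℝ) (v : ℝ × ℝ → ℝ) (w : ℝ × ℝ × ℝ → ℝ) (z : ℝ × ℝ × ℝ) : ℝ :=
  ε ^ 2 * dX (dX w) z + ε ^ 2 * dY (dY w) z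
    - 2 * ε ^ 2 * z.2.2 * (d1 v (z.1, z.2.1) / (1 + v (z.1, z.2.1))) * dX (dZ w) z
    - 2 * ε ^ 2 * z.2.2 * (d2 v (z.1, z.2.1) / (1 + v (z.1, z.2.1))) * dY (dZ w) z
    + ((1 + ε ^ 2 * z.2.2 ^ 2 * gradSq v (z.1, z.2.1)) / (1 + v (z.1, z.2.1)) ^ 2)
        * dZ (dZ w) z
    + ε ^ 2 * z.2.2 * (2 * gradSq v (z.1, z.2.1) / (1 + v (z.1, z.2.1)) ^ 2
        - lap v (z.1, z.2.1) / (1 + v (z.1, z.2.1))) * dZ w z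

/-- The open region `Ω(v)` between the ground plate at `z = -1` and the deflected plate. -/
def OmegaV (D : Set (ℝ × ℝ)) (v : ℝ × ℝ → ℝ) : Set (ℝ × ℝ × ℝ) :=
  {z : ℝ × ℝ × ℝ | (z.1, z.2.1) ∈ D ∧ -1 < z.2.2 ∧ z.2.2 < v (z.1, z.2.1)}

/-- The cylinder `Ω = D × (0,1)`. -/
def cyl (D : Set (ℝ × ℝ)) : Set (ℝ × ℝ × ℝ) :=
  {z : ℝ × ℝ × ℝ | (z.1, z.2.1) ∈ D ∧ z.2.2 ∈ Ioo (0 : ℝ) 1}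

/-- `D` has a `C²`-smooth boundary: near each boundary point, the boundary is the zero
level set of a `C²` function with non-vanishing gradient. -/
def C2Boundary (D : Set (ℝ × ℝ)) : Prop :=
  ∀ q ∈ frontier D, ∃ (U : Set (ℝ × ℝ)) (f : ℝ × ℝ → ℝ), IsOpen U ∧ q ∈ U ∧
    ContDiff ℝ 2 f ∧ U ∩ frontier D = U ∩ f ⁻¹' {0} ∧ ∀ r ∈ U, fderiv ℝ f r ≠ 0


/-- Line through z in x-direction has derivative L (1,0,0). -/
lemma hasDerivAt_lineX {f : ℝ × ℝ × ℝ → ℝ} {L : ℝ × ℝ × ℝ →L[ℝ] ℝ} {z : ℝ × ℝ × ℝ}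
    (h : HasFDerivAt f L z) :
    HasDerivAt (fun t => f (t, z.2.1, z.2.2)) (L (1, 0, 0)) z.1 := by
  have hline : HasDerivAt (fun t : ℝ => ((t, z.2.1, z.2.2) : ℝ × ℝ × ℝ))
      ((1 : ℝ), (0 : ℝ), (0 : ℝ)) z.1 :=
    (hasDerivAt_id z.1).prodMk ((hasDerivAt_const _ _).prodMk (hasDerivAt_const _ _))
  exact h.comp_hasDerivAt z.1 hline

lemma hasDerivAt_lineY {f : ℝ × ℝ × ℝ → ℝ} {L : ℝ × ℝ × ℝ →L[ℝ] ℝ} {z : ℝ × ℝ × ℝ}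
    (h : HasFDerivAt f L z) :
    HasDerivAt (fun t => f (z.1, t, z.2.2)) (L (0, 1, 0)) z.2.1 := by
  have hline : HasDerivAt (fun t : ℝ => ((z.1, t, z.2.2) : ℝ × ℝ × ℝ))
      ((0 : ℝ), (1 : ℝ), (0 : ℝ)) z.2.1 :=
    (hasDerivAt_const _ _).prodMk ((hasDerivAt_id _).prodMk (hasDerivAt_const _ _))
  exact h.comp_hasDerivAt z.2.1 hline

lemma hasDerivAt_lineZ {f : ℝ × ℝ × ℝ → ℝ} {L : ℝ × ℝ × ℝ →L[ℝ] ℝ} {z : ℝ × ℝ × ℝ}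
    (h : HasFDerivAt f L z) :
    HasDerivAt (fun t => f (z.1, z.2.1, t)) (L (0, 0, 1)) z.2.2 := by
  have hline : HasDerivAt (fun t : ℝ => ((z.1, z.2.1, t) : ℝ × ℝ × ℝ))
      ((0 : ℝ), (0 : ℝ), (1 : ℝ)) z.2.2 :=
    (hasDerivAt_const _ _).prodMk ((hasDerivAt_const _ _).prodMk (hasDerivAt_id _))
  exact h.comp_hasDerivAt z.2.2 hline

lemma hasDerivAt_line1 {f : ℝ × ℝ → ℝ} {L : ℝ × ℝ →L[ℝ] ℝ} {q : ℝ × ℝ}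
    (h : HasFDerivAt f L q) :
    HasDerivAt (fun t => f (t, q.2)) (L (1, 0)) q.1 := by
  have hline : HasDerivAt (fun t : ℝ => ((t, q.2) : ℝ × ℝ)) ((1 : ℝ), (0 : ℝ)) q.1 :=
    (hasDerivAt_id _).prodMk (hasDerivAt_const _ _)
  exact h.comp_hasDerivAt q.1 hline

lemma hasDerivAt_line2 {f : ℝ × ℝ → ℝ} {L : ℝ × ℝ →L[ℝ] ℝ} {q : ℝ × ℝ}
    (h : HasFDerivAt f L q) :
    HasDerivAt (fun t => f (q.1, t)) (L (0, 1)) q.2 := by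
  have hline : HasDerivAt (fun t : ℝ => ((q.1, t) : ℝ × ℝ)) ((0 : ℝ), (1 : ℝ)) q.2 :=
    (hasDerivAt_const _ _).prodMk (hasDerivAt_id _)
  exact h.comp_hasDerivAt q.2 hline

/-- An open bounded order-connected nonempty subset of ℝ is an open interval. -/
lemma isOpen_eq_Ioo {S : Set ℝ} (hS : IsOpen S) (hb : Bornology.IsBounded S)
    (hoc : S.OrdConnected) (hne : S.Nonempty) : S = Ioo (sInf S) (sSup S) := by
  have hba : BddAbove S := hb.bddAbove
  have hbb : BddBelow S := hb.bddBelow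
  ext x
  constructor
  · intro hx
    obtain ⟨ε, hε, hball⟩ := Metric.isOpen_iff.1 hS x hx
    have h1 : x - ε / 2 ∈ S := by
      apply hball; rw [Metric.mem_ball, Real.dist_eq, abs_of_nonpos (by linarith : x - ε/2 - x ≤ 0)]
      linarith
    have h2 : x + ε / 2 ∈ S := by
      apply hball; rw [Metric.mem_ball, Real.dist_eq, abs_of_nonneg (by linarith : (0:ℝ) ≤ x + ε/2 - x)]
      linarith
    exact ⟨lt_of_le_of_lt (csInf_le hbb h1) (by linarith),
      lt_of_lt_of_le (by linarith) (le_csSup hba h2)⟩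
  · rintro ⟨h1, h2⟩
    obtain ⟨a, haS, hax⟩ := exists_lt_of_csInf_lt hne h1
    obtain ⟨b, hbS, hxb⟩ := exists_lt_of_lt_csSup hne h2
    exact hoc.out haS hbS ⟨hax.le, hxb.le⟩

/-- FTC-based lemma: the integral of the derivative of a function vanishing
at the ends of an open bounded interval-like set is zero. -/
lemma slice_integral_zero {S : Set ℝ} (hS : IsOpen S) (hb : Bornology.IsBounded S)
    (hoc : S.OrdConnected) {H h : ℝ → ℝ} (hHc : ContinuousOn H (closure S))
    (hd : ∀ x ∈ S, HasDerivAt H (h x) x) (hhc : ContinuousOn h (closure S))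
    (hH0 : ∀ x ∈ closure S, x ∉ S → H x = 0) :
    ∫ x in S, h x = 0 := by
  rcases S.eq_empty_or_nonempty with rfl | hne
  · simp
  obtain ⟨x0, hx0⟩ := hne
  have hSeq : S = Ioo (sInf S) (sSup S) := isOpen_eq_Ioo hS hb hoc ⟨x0, hx0⟩
  set a := sInf S
  set b := sSup S
  have hab : a < b := by
    have := hSeq ▸ hx0; exact lt_trans this.1 this.2
  have hcl : closure S = Icc a b := by rw [hSeq, closure_Ioo hab.ne]
  have haS : a ∉ S := by rw [hSeq]; simp
  have hbS : b ∉ S := by rw [hSeq]; simp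
  have hHa : H a = 0 := hH0 a (hcl ▸ ⟨le_refl a, hab.le⟩) haS
  have hHb : H b = 0 := hH0 b (hcl ▸ ⟨hab.le, le_refl b⟩) hbS
  have hint : IntervalIntegrable h volume a b := by
    apply ContinuousOn.intervalIntegrable
    rwa [uIcc_of_le hab.le, ← hcl]
  have hftc : ∫ x in a..b, h x = H b - H a := by
    apply intervalIntegral.integral_eq_sub_of_hasDerivAt_of_le hab.le (hcl ▸ hHc)
      (fun x hx => hd x (hSeq ▸ hx)) hint
  rw [hSeq]
  rw [← MeasureTheory.integral_Ioc_eq_integral_Ioo, ← intervalIntegral.integral_of_le hab.le]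
  rw [hftc, hHa, hHb, sub_zero]


lemma cyl_eq_preimage (D : Set (ℝ × ℝ)) :
    cyl D = (Homeomorph.prodAssoc ℝ ℝ ℝ).symm ⁻¹' (D ×ˢ Ioo (0:ℝ) 1) := by
  ext z; simp [cyl, Homeomorph.prodAssoc]

lemma cyl_isOpen {D : Set (ℝ × ℝ)} (hD : IsOpen D) : IsOpen (cyl D) := by
  rw [cyl_eq_preimage]
  exact (hD.prod isOpen_Ioo).preimage (Homeomorph.continuous _)

lemma closure_cyl (D : Set (ℝ × ℝ)) :
    closure (cyl D) = {z : ℝ × ℝ × ℝ | (z.1, z.2.1) ∈ closure D ∧ z.2.2 ∈ Icc (0:ℝ) 1} := by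
  rw [cyl_eq_preimage, ← Homeomorph.preimage_closure, closure_prod_eq,
    closure_Ioo (by norm_num : (0:ℝ) ≠ 1)]
  ext z; simp [Homeomorph.prodAssoc]

lemma cyl_convex {D : Set (ℝ × ℝ)} (hD : Convex ℝ D) : Convex ℝ (cyl D) := by
  rintro z1 ⟨h1, h1'⟩ z2 ⟨h2, h2'⟩ a b ha hb hab
  constructor
  · have := hD h1 h2 ha hb hab
    simpa using this
  · have := (convex_Ioo (0:ℝ) 1) h1' h2' ha hb hab
    simpa using this

lemma cyl_bounded {D : Set (ℝ × ℝ)} (hD : Bornology.IsBounded D) :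
    Bornology.IsBounded (cyl D) := by
  obtain ⟨r, hr⟩ := hD.subset_closedBall 0
  have : cyl D ⊆ Metric.closedBall 0 (max r 1) := by
    rintro z ⟨hz, hz'⟩
    have h1 : ‖(z.1, z.2.1)‖ ≤ r := by
      have := hr hz; rwa [Metric.mem_closedBall, dist_zero_right] at this
    rw [Metric.mem_closedBall, dist_zero_right]
    rw [Prod.norm_def] at h1 ⊢
    rw [Prod.norm_def]
    have hx : ‖z.1‖ ≤ r := le_trans (le_max_left _ _) h1
    have hy : ‖z.2.1‖ ≤ r := le_trans (le_max_right _ _) h1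
    have ht : ‖z.2.2‖ ≤ 1 := by
      rw [Real.norm_eq_abs, abs_le]; constructor <;> [linarith [hz'.1]; linarith [hz'.2]]
    simp only [max_le_iff]
    exact ⟨le_max_of_le_left hx, le_max_of_le_left hy, le_max_of_le_right ht⟩
  exact Bornology.IsBounded.subset (Metric.isBounded_closedBall) this

section
variable {E : Type*} [NormedAddCommGroup E] [NormedSpace ℝ E]

lemma hasFDerivAt_of_contDiffOn_closure {f : E → ℝ} {U : Set E} (hU : IsOpen U)
    (hf : ContDiffOn ℝ 2 f (closure U)) {z : E} (hz : z ∈ U) :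
    HasFDerivAt f (fderivWithin ℝ f (closure U) z) z := by
  have hnh : closure U ∈ nhds z := mem_nhds_iff.2 ⟨U, subset_closure, hU, hz⟩
  rw [fderivWithin_of_mem_nhds hnh]
  exact ((hf.contDiffAt hnh).differentiableAt (by norm_num)).hasFDerivAt

lemma hasFDerivAt_fderivWithin_closure {f : E → ℝ} {U : Set E} (hU : IsOpen U)
    (hf : ContDiffOn ℝ 2 f (closure U)) {z : E} (hz : z ∈ U) :
    HasFDerivAt (fderivWithin ℝ f (closure U))
      (fderivWithin ℝ (fderivWithin ℝ f (closure U)) (closure U) z) z := by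
  have hnh : closure U ∈ nhds z := mem_nhds_iff.2 ⟨U, subset_closure, hU, hz⟩
  have hUnh : U ∈ nhds z := hU.mem_nhds hz
  have h2 : ContDiffAt ℝ 2 f z := hf.contDiffAt hnh
  have hev : fderivWithin ℝ f (closure U) =ᶠ[nhds z] fderiv ℝ f := by
    filter_upwards [hUnh] with w hw
    exact fderivWithin_of_mem_nhds (mem_nhds_iff.2 ⟨U, subset_closure, hU, hw⟩)
  have h4 : HasFDerivAt (fderiv ℝ f) (fderiv ℝ (fderiv ℝ f) z) z :=
    ((h2.fderiv_right (m := 1) (by norm_num)).differentiableAt one_ne_zero).hasFDerivAt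
  have h6 : fderivWithin ℝ (fderivWithin ℝ f (closure U)) (closure U) z
      = fderiv ℝ (fderiv ℝ f) z := by
    rw [fderivWithin_of_mem_nhds hnh, hev.fderiv_eq]
  rw [h6]
  exact h4.congr_of_eventuallyEq hev

lemma snd_deriv_symm {f : E → ℝ} {U : Set E} (hU : IsOpen U)
    (hf : ContDiffOn ℝ 2 f (closure U)) {z : E} (hz : z ∈ U) (u w : E) :
    fderivWithin ℝ (fderivWithin ℝ f (closure U)) (closure U) z u w
      = fderivWithin ℝ (fderivWithin ℝ f (closure U)) (closure U) z w u := by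
  apply second_derivative_symmetric_of_eventually
    (f := f) (f' := fderivWithin ℝ f (closure U))
  · filter_upwards [hU.mem_nhds hz] with w hw
    exact hasFDerivAt_of_contDiffOn_closure hU hf hw
  · exact hasFDerivAt_fderivWithin_closure hU hf hz

lemma hasFDerivAt_clm_apply' {F : E → (E →L[ℝ] ℝ)} {F' : E →L[ℝ] E →L[ℝ] ℝ} {z : E}
    (h : HasFDerivAt F F' z) (u : E) :
    HasFDerivAt (fun w => F w u) ((ContinuousLinearMap.apply ℝ ℝ u).comp F') z :=
  ((ContinuousLinearMap.apply ℝ ℝ u).hasFDerivAt).comp z h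

end

-- ===== stage 4 : slice set facts and flux lemmas =====

lemma sliceX_facts {D : Set (ℝ × ℝ)} (hD : IsOpen D) (hDb : Bornology.IsBounded D)
    (hDconv : Convex ℝ D) (y : ℝ) :
    IsOpen {x : ℝ | (x, y) ∈ D} ∧ Bornology.IsBounded {x : ℝ | (x, y) ∈ D} ∧
      Set.OrdConnected {x : ℝ | (x, y) ∈ D} ∧
      (∀ x ∈ closure {x : ℝ | (x, y) ∈ D}, (x, y) ∈ closure D) := by
  set S := {x : ℝ | (x, y) ∈ D} with hSdef
  have hmap : Continuous (fun x : ℝ => ((x, y) : ℝ × ℝ)) := continuous_id.prodMk continuous_const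
  refine ⟨hD.preimage hmap, ?_, ?_, ?_⟩
  · obtain ⟨r, hr⟩ := hDb.subset_closedBall 0
    apply Bornology.IsBounded.subset (Metric.isBounded_closedBall (x := (0:ℝ)) (r := r))
    intro x hx
    have h1 : ‖((x, y) : ℝ × ℝ)‖ ≤ r := by
      have := hr hx; rwa [Metric.mem_closedBall, dist_zero_right] at this
    rw [Metric.mem_closedBall, dist_zero_right]
    exact le_trans (norm_fst_le ((x, y) : ℝ × ℝ)) h1
  · constructor
    intro x1 h1 x2 h2 w hw
    have hx12 : x1 ≤ x2 := le_trans hw.1 hw.2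
    have hseg : w ∈ segment ℝ x1 x2 := by rwa [segment_eq_Icc hx12]
    obtain ⟨a, b, ha, hb, hab, hw'⟩ := hseg
    have : a • ((x1, y) : ℝ × ℝ) + b • ((x2, y) : ℝ × ℝ) = ((w, y) : ℝ × ℝ) := by
      rw [Prod.smul_mk, Prod.smul_mk, Prod.mk_add_mk]
      have h2' : a • y + b • y = y := by
        simp only [smul_eq_mul]; rw [← add_mul, hab, one_mul]
      rw [hw', h2']
    have hmem := hDconv h1 h2 ha hb hab
    rw [this] at hmem
    exact hmem
  · intro x hx
    exact map_mem_closure (f := fun w : ℝ => ((w, y) : ℝ × ℝ)) (s := S) (t := D) hmap hx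
      (fun w hw => hw)

lemma sliceY_facts {D : Set (ℝ × ℝ)} (hD : IsOpen D) (hDb : Bornology.IsBounded D)
    (hDconv : Convex ℝ D) (x : ℝ) :
    IsOpen {y : ℝ | (x, y) ∈ D} ∧ Bornology.IsBounded {y : ℝ | (x, y) ∈ D} ∧
      Set.OrdConnected {y : ℝ | (x, y) ∈ D} ∧
      (∀ y ∈ closure {y : ℝ | (x, y) ∈ D}, (x, y) ∈ closure D) := by
  set S := {y : ℝ | (x, y) ∈ D} with hSdef
  have hmap : Continuous (fun y : ℝ => ((x, y) : ℝ × ℝ)) := continuous_const.prodMk continuous_id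
  refine ⟨hD.preimage hmap, ?_, ?_, ?_⟩
  · obtain ⟨r, hr⟩ := hDb.subset_closedBall 0
    apply Bornology.IsBounded.subset (Metric.isBounded_closedBall (x := (0:ℝ)) (r := r))
    intro y hy
    have h1 : ‖((x, y) : ℝ × ℝ)‖ ≤ r := by
      have := hr hy; rwa [Metric.mem_closedBall, dist_zero_right] at this
    rw [Metric.mem_closedBall, dist_zero_right]
    exact le_trans (norm_snd_le ((x, y) : ℝ × ℝ)) h1
  · constructor
    intro y1 h1 y2 h2 w hw
    have hy12 : y1 ≤ y2 := le_trans hw.1 hw.2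
    have hseg : w ∈ segment ℝ y1 y2 := by rwa [segment_eq_Icc hy12]
    obtain ⟨a, b, ha, hb, hab, hw'⟩ := hseg
    have : a • ((x, y1) : ℝ × ℝ) + b • ((x, y2) : ℝ × ℝ) = ((x, w) : ℝ × ℝ) := by
      rw [Prod.smul_mk, Prod.smul_mk, Prod.mk_add_mk]
      have h2' : a • x + b • x = x := by
        simp only [smul_eq_mul]; rw [← add_mul, hab, one_mul]
      rw [hw', h2']
    have hmem := hDconv h1 h2 ha hb hab
    rw [this] at hmem
    exact hmem
  · intro y hy
    exact map_mem_closure (f := fun w : ℝ => ((x, w) : ℝ × ℝ)) (s := S) (t := D) hmap hy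
      (fun w hw => hw)

-- ===== stage 5 : flux lemmas =====

lemma fluxX_slice {D : Set (ℝ × ℝ)} (hD : IsOpen D) (hDb : Bornology.IsBounded D)
    (hDconv : Convex ℝ D) {A H : ℝ × ℝ × ℝ → ℝ}
    (hAc : ContinuousOn A (closure (cyl D)))
    (hHc : ContinuousOn H (closure (cyl D)))
    (hA0 : ∀ z ∈ closure (cyl D), z ∉ cyl D → A z = 0)
    (hd : ∀ z ∈ cyl D, HasDerivAt (fun s => A (s, z.2.1, z.2.2)) (H z) z.1)
    {y t : ℝ} (ht : t ∈ Ioo (0:ℝ) 1) :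
    ∫ x in {x : ℝ | (x, y) ∈ D}, H (x, y, t) = 0 := by
  obtain ⟨hSo, hSb, hSoc, hScl⟩ := sliceX_facts hD hDb hDconv y
  have hmapK : ∀ x ∈ closure {x : ℝ | (x, y) ∈ D}, ((x, y, t) : ℝ × ℝ × ℝ) ∈ closure (cyl D) := by
    intro x hx
    rw [closure_cyl]
    exact ⟨hScl x hx, ⟨ht.1.le, ht.2.le⟩⟩
  have hcont : Continuous (fun x : ℝ => ((x, y, t) : ℝ × ℝ × ℝ)) :=
    continuous_id.prodMk continuous_const
  apply slice_integral_zero hSo hSb hSoc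
  · exact hAc.comp hcont.continuousOn hmapK
  · intro x hx
    exact hd (x, y, t) ⟨hx, ht⟩
  · exact hHc.comp hcont.continuousOn hmapK
  · intro x hx hxS
    exact hA0 _ (hmapK x hx) (fun hz => hxS hz.1)

lemma fluxY_slice {D : Set (ℝ × ℝ)} (hD : IsOpen D) (hDb : Bornology.IsBounded D)
    (hDconv : Convex ℝ D) {A H : ℝ × ℝ × ℝ → ℝ}
    (hAc : ContinuousOn A (closure (cyl D)))
    (hHc : ContinuousOn H (closure (cyl D)))
    (hA0 : ∀ z ∈ closure (cyl D), z ∉ cyl D → A z = 0)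
    (hd : ∀ z ∈ cyl D, HasDerivAt (fun s => A (z.1, s, z.2.2)) (H z) z.2.1)
    {x t : ℝ} (ht : t ∈ Ioo (0:ℝ) 1) :
    ∫ y in {y : ℝ | (x, y) ∈ D}, H (x, y, t) = 0 := by
  obtain ⟨hSo, hSb, hSoc, hScl⟩ := sliceY_facts hD hDb hDconv x
  have hmapK : ∀ y ∈ closure {y : ℝ | (x, y) ∈ D}, ((x, y, t) : ℝ × ℝ × ℝ) ∈ closure (cyl D) := by
    intro y hy
    rw [closure_cyl]
    exact ⟨hScl y hy, ⟨ht.1.le, ht.2.le⟩⟩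
  have hcont : Continuous (fun y : ℝ => ((x, y, t) : ℝ × ℝ × ℝ)) :=
    continuous_const.prodMk (continuous_id.prodMk continuous_const)
  apply slice_integral_zero hSo hSb hSoc
  · exact hAc.comp hcont.continuousOn hmapK
  · intro y hy
    exact hd (x, y, t) ⟨hy, ht⟩
  · exact hHc.comp hcont.continuousOn hmapK
  · intro y hy hyS
    exact hA0 _ (hmapK y hy) (fun hz => hyS hz.1)

lemma fluxZ_slice {D : Set (ℝ × ℝ)} {A H : ℝ × ℝ × ℝ → ℝ}
    (hAc : ContinuousOn A (closure (cyl D)))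
    (hHc : ContinuousOn H (closure (cyl D)))
    (hA0 : ∀ z ∈ closure (cyl D), z ∉ cyl D → A z = 0)
    (hd : ∀ z ∈ cyl D, HasDerivAt (fun s => A (z.1, z.2.1, s)) (H z) z.2.2)
    {x y : ℝ} (hxy : (x, y) ∈ D) :
    ∫ t in Ioo (0:ℝ) 1, H (x, y, t) = 0 := by
  have hmapK : ∀ t ∈ closure (Ioo (0:ℝ) 1), ((x, y, t) : ℝ × ℝ × ℝ) ∈ closure (cyl D) := by
    intro t htc
    rw [closure_Ioo (by norm_num : (0:ℝ) ≠ 1)] at htc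
    rw [closure_cyl]
    exact ⟨subset_closure hxy, htc⟩
  have hcont : Continuous (fun t : ℝ => ((x, y, t) : ℝ × ℝ × ℝ)) :=
    continuous_const.prodMk (continuous_const.prodMk continuous_id)
  apply slice_integral_zero isOpen_Ioo (Metric.isBounded_Ioo 0 1) Set.ordConnected_Ioo
  · exact hAc.comp hcont.continuousOn hmapK
  · intro t htI
    exact hd (x, y, t) ⟨hxy, htI⟩
  · exact hHc.comp hcont.continuousOn hmapK
  · intro t htc htI
    exact hA0 _ (hmapK t htc) (fun hz => htI hz.2)

lemma fluxX_zero {D : Set (ℝ × ℝ)} (hD : IsOpen D) (hDb : Bornology.IsBounded D)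
    (hDconv : Convex ℝ D) {A H : ℝ × ℝ × ℝ → ℝ}
    (hAc : ContinuousOn A (closure (cyl D)))
    (hHc : ContinuousOn H (closure (cyl D)))
    (hA0 : ∀ z ∈ closure (cyl D), z ∉ cyl D → A z = 0)
    (hd : ∀ z ∈ cyl D, HasDerivAt (fun s => A (s, z.2.1, z.2.2)) (H z) z.1) :
    ∫ z in cyl D, H z = 0 := by
  have hΩo := cyl_isOpen hD
  have hKc : IsCompact (closure (cyl D)) :=
    Metric.isCompact_of_isClosed_isBounded isClosed_closure (cyl_bounded hDb).closure
  have hint : IntegrableOn H (cyl D) :=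
    (ContinuousOn.integrableOn_compact hKc hHc).mono_set subset_closure
  have hind : Integrable ((cyl D).indicator H) volume :=
    hint.integrable_indicator hΩo.measurableSet
  rw [← integral_indicator hΩo.measurableSet]
  have hprod : Integrable ((cyl D).indicator H)
      ((volume : Measure ℝ).prod (volume : Measure (ℝ × ℝ))) := by
    rwa [← Measure.volume_eq_prod]
  have h0 : ∀ p : ℝ × ℝ, ∫ x : ℝ, (cyl D).indicator H (x, p) = 0 := by
    rintro ⟨y, t⟩
    by_cases ht : t ∈ Ioo (0:ℝ) 1
    · have heq : ∀ x : ℝ, (cyl D).indicator H (x, y, t)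
          = ({x : ℝ | (x, y) ∈ D}).indicator (fun x' => H (x', y, t)) x := by
        intro x
        by_cases hx : (x, y) ∈ D
        · have h1 : (x, y, t) ∈ cyl D := ⟨hx, ht⟩
          have h2 : x ∈ {x : ℝ | (x, y) ∈ D} := hx
          rw [Set.indicator_of_mem h1, Set.indicator_of_mem h2]
        · have h1 : (x, y, t) ∉ cyl D := fun hz => hx hz.1
          have h2 : x ∉ {x : ℝ | (x, y) ∈ D} := hx
          rw [Set.indicator_of_notMem h1, Set.indicator_of_notMem h2]
      rw [integral_congr_ae (Filter.Eventually.of_forall heq),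
        integral_indicator ((sliceX_facts hD hDb hDconv y).1.measurableSet)]
      exact fluxX_slice hD hDb hDconv hAc hHc hA0 hd ht
    · have heq : ∀ x : ℝ, (cyl D).indicator H (x, y, t) = 0 := by
        intro x
        have h1 : (x, y, t) ∉ cyl D := fun hz => ht hz.2
        rw [Set.indicator_of_notMem h1]
      rw [integral_congr_ae (Filter.Eventually.of_forall heq), integral_zero]
  calc ∫ z, (cyl D).indicator H z
      = ∫ z, (cyl D).indicator H z ∂((volume : Measure ℝ).prod volume) := by
        rw [← Measure.volume_eq_prod]
    _ = ∫ x : ℝ, ∫ p : ℝ × ℝ, (cyl D).indicator H (x, p) := integral_prod _ hprod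
    _ = ∫ p : ℝ × ℝ, ∫ x : ℝ, (cyl D).indicator H (x, p) := integral_integral_swap hprod
    _ = 0 := by simp only [h0, integral_zero]

lemma fluxY_zero {D : Set (ℝ × ℝ)} (hD : IsOpen D) (hDb : Bornology.IsBounded D)
    (hDconv : Convex ℝ D) {A H : ℝ × ℝ × ℝ → ℝ}
    (hAc : ContinuousOn A (closure (cyl D)))
    (hHc : ContinuousOn H (closure (cyl D)))
    (hA0 : ∀ z ∈ closure (cyl D), z ∉ cyl D → A z = 0)
    (hd : ∀ z ∈ cyl D, HasDerivAt (fun s => A (z.1, s, z.2.2)) (H z) z.2.1) :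
    ∫ z in cyl D, H z = 0 := by
  have hΩo := cyl_isOpen hD
  have hKc : IsCompact (closure (cyl D)) :=
    Metric.isCompact_of_isClosed_isBounded isClosed_closure (cyl_bounded hDb).closure
  have hint : IntegrableOn H (cyl D) :=
    (ContinuousOn.integrableOn_compact hKc hHc).mono_set subset_closure
  have hind : Integrable ((cyl D).indicator H) volume :=
    hint.integrable_indicator hΩo.measurableSet
  rw [← integral_indicator hΩo.measurableSet]
  have hprod : Integrable ((cyl D).indicator H)
      ((volume : Measure ℝ).prod (volume : Measure (ℝ × ℝ))) := by
    rwa [← Measure.volume_eq_prod]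
  have hae : ∀ᵐ x : ℝ, Integrable (fun p : ℝ × ℝ => (cyl D).indicator H (x, p)) volume := by
    have := hprod.prod_right_ae
    filter_upwards [this] with x hx
    rwa [Measure.volume_eq_prod]
  have h0 : ∀ᵐ x : ℝ, ∫ p : ℝ × ℝ, (cyl D).indicator H (x, p) = 0 := by
    filter_upwards [hae] with x hxint
    have hxp : Integrable (fun p : ℝ × ℝ => (cyl D).indicator H (x, p))
        ((volume : Measure ℝ).prod (volume : Measure ℝ)) := by
      rwa [← Measure.volume_eq_prod]
    have hinner : ∀ t : ℝ, ∫ y : ℝ, (cyl D).indicator H (x, y, t) = 0 := by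
      intro t
      by_cases ht : t ∈ Ioo (0:ℝ) 1
      · have heq : ∀ y : ℝ, (cyl D).indicator H (x, y, t)
            = ({y : ℝ | (x, y) ∈ D}).indicator (fun y' => H (x, y', t)) y := by
          intro y
          by_cases hy : (x, y) ∈ D
          · have h1 : (x, y, t) ∈ cyl D := ⟨hy, ht⟩
            have h2 : y ∈ {y : ℝ | (x, y) ∈ D} := hy
            rw [Set.indicator_of_mem h1, Set.indicator_of_mem h2]
          · have h1 : (x, y, t) ∉ cyl D := fun hz => hy hz.1
            have h2 : y ∉ {y : ℝ | (x, y) ∈ D} := hy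
            rw [Set.indicator_of_notMem h1, Set.indicator_of_notMem h2]
        rw [integral_congr_ae (Filter.Eventually.of_forall heq),
          integral_indicator ((sliceY_facts hD hDb hDconv x).1.measurableSet)]
        exact fluxY_slice hD hDb hDconv hAc hHc hA0 hd ht
      · have heq : ∀ y : ℝ, (cyl D).indicator H (x, y, t) = 0 := by
          intro y
          have h1 : (x, y, t) ∉ cyl D := fun hz => ht hz.2
          rw [Set.indicator_of_notMem h1]
        rw [integral_congr_ae (Filter.Eventually.of_forall heq), integral_zero]
    calc ∫ p : ℝ × ℝ, (cyl D).indicator H (x, p)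
        = ∫ p : ℝ × ℝ, (cyl D).indicator H (x, p)
            ∂((volume : Measure ℝ).prod (volume : Measure ℝ)) := by
          rw [← Measure.volume_eq_prod]
      _ = ∫ y : ℝ, ∫ t : ℝ, (cyl D).indicator H (x, y, t) := integral_prod _ hxp
      _ = ∫ t : ℝ, ∫ y : ℝ, (cyl D).indicator H (x, y, t) := integral_integral_swap hxp
      _ = 0 := by simp only [hinner, integral_zero]
  calc ∫ z, (cyl D).indicator H z
      = ∫ z, (cyl D).indicator H z ∂((volume : Measure ℝ).prod volume) := by
        rw [← Measure.volume_eq_prod]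
    _ = ∫ x : ℝ, ∫ p : ℝ × ℝ, (cyl D).indicator H (x, p) := integral_prod _ hprod
    _ = 0 := by
        rw [integral_congr_ae h0, integral_zero]

lemma fluxZ_zero {D : Set (ℝ × ℝ)} (hD : IsOpen D) (hDb : Bornology.IsBounded D)
    {A H : ℝ × ℝ × ℝ → ℝ}
    (hAc : ContinuousOn A (closure (cyl D)))
    (hHc : ContinuousOn H (closure (cyl D)))
    (hA0 : ∀ z ∈ closure (cyl D), z ∉ cyl D → A z = 0)
    (hd : ∀ z ∈ cyl D, HasDerivAt (fun s => A (z.1, z.2.1, s)) (H z) z.2.2) :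
    ∫ z in cyl D, H z = 0 := by
  have hΩo := cyl_isOpen hD
  have hKc : IsCompact (closure (cyl D)) :=
    Metric.isCompact_of_isClosed_isBounded isClosed_closure (cyl_bounded hDb).closure
  have hint : IntegrableOn H (cyl D) :=
    (ContinuousOn.integrableOn_compact hKc hHc).mono_set subset_closure
  have hind : Integrable ((cyl D).indicator H) volume :=
    hint.integrable_indicator hΩo.measurableSet
  rw [← integral_indicator hΩo.measurableSet]
  have hprod : Integrable ((cyl D).indicator H)
      ((volume : Measure ℝ).prod (volume : Measure (ℝ × ℝ))) := by
    rwa [← Measure.volume_eq_prod]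
  have hae : ∀ᵐ x : ℝ, Integrable (fun p : ℝ × ℝ => (cyl D).indicator H (x, p)) volume := by
    have := hprod.prod_right_ae
    filter_upwards [this] with x hx
    rwa [Measure.volume_eq_prod]
  have h0 : ∀ᵐ x : ℝ, ∫ p : ℝ × ℝ, (cyl D).indicator H (x, p) = 0 := by
    filter_upwards [hae] with x hxint
    have hxp : Integrable (fun p : ℝ × ℝ => (cyl D).indicator H (x, p))
        ((volume : Measure ℝ).prod (volume : Measure ℝ)) := by
      rwa [← Measure.volume_eq_prod]
    have hinner : ∀ y : ℝ, ∫ t : ℝ, (cyl D).indicator H (x, y, t) = 0 := by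
      intro y
      by_cases hxy : (x, y) ∈ D
      · have heq : ∀ t : ℝ, (cyl D).indicator H (x, y, t)
            = (Ioo (0:ℝ) 1).indicator (fun t' => H (x, y, t')) t := by
          intro t
          by_cases ht : t ∈ Ioo (0:ℝ) 1
          · have h1 : (x, y, t) ∈ cyl D := ⟨hxy, ht⟩
            rw [Set.indicator_of_mem h1, Set.indicator_of_mem ht]
          · have h1 : (x, y, t) ∉ cyl D := fun hz => ht hz.2
            rw [Set.indicator_of_notMem h1, Set.indicator_of_notMem ht]
        rw [integral_congr_ae (Filter.Eventually.of_forall heq),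
          integral_indicator measurableSet_Ioo]
        exact fluxZ_slice hAc hHc hA0 hd hxy
      · have heq : ∀ t : ℝ, (cyl D).indicator H (x, y, t) = 0 := by
          intro t
          have h1 : (x, y, t) ∉ cyl D := fun hz => hxy hz.1
          rw [Set.indicator_of_notMem h1]
        rw [integral_congr_ae (Filter.Eventually.of_forall heq), integral_zero]
    calc ∫ p : ℝ × ℝ, (cyl D).indicator H (x, p)
        = ∫ p : ℝ × ℝ, (cyl D).indicator H (x, p)
            ∂((volume : Measure ℝ).prod (volume : Measure ℝ)) := by
          rw [← Measure.volume_eq_prod]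
      _ = ∫ y : ℝ, ∫ t : ℝ, (cyl D).indicator H (x, y, t) := integral_prod _ hxp
      _ = 0 := by simp only [hinner, integral_zero]
  calc ∫ z, (cyl D).indicator H z
      = ∫ z, (cyl D).indicator H z ∂((volume : Measure ℝ).prod volume) := by
        rw [← Measure.volume_eq_prod]
    _ = ∫ x : ℝ, ∫ p : ℝ × ℝ, (cyl D).indicator H (x, p) := integral_prod _ hprod
    _ = 0 := by
        rw [integral_congr_ae h0, integral_zero]

set_option maxHeartbeats 3200000 in
/-- First energy identity: for `Φ ∈ C²(Ω̄)` vanishing on `∂Ω`,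
`-∫_Ω Φ 𝓛_vΦ = ε²∫ Pₓ² + ε²∫ P_y² + ∫ P_η² - ε²∫ Φ[(∂ₓv/(1+v))Pₓ + (∂_yv/(1+v))P_y]`. -/
theorem stmt7 (D : Set (ℝ × ℝ)) (hD : IsOpen D) (hDb : Bornology.IsBounded D)
    (hDconv : Convex ℝ D) (hD2 : C2Boundary D) (ε : ℝ) (hε : 0 < ε)
    (v : ℝ × ℝ → ℝ) (hv : ContDiffOn ℝ 2 v (closure D)) (hv1 : ∀ q ∈ closure D, -1 < v q)
    (Φ : ℝ × ℝ × ℝ → ℝ) (hΦ : ContDiffOn ℝ 2 Φ (closure (cyl D)))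
    (hΦ0 : ∀ z ∈ frontier (cyl D), Φ z = 0)
    (Px Py Pe : ℝ × ℝ × ℝ → ℝ)
    (hPx : ∀ z : ℝ × ℝ × ℝ, Px z
        = dX Φ z - z.2.2 * (d1 v (z.1, z.2.1) / (1 + v (z.1, z.2.1))) * dZ Φ z)
    (hPy : ∀ z : ℝ × ℝ × ℝ, Py z
        = dY Φ z - z.2.2 * (d2 v (z.1, z.2.1) / (1 + v (z.1, z.2.1))) * dZ Φ z)
    (hPe : ∀ z : ℝ × ℝ × ℝ, Pe z = dZ Φ z / (1 + v (z.1, z.2.1))) :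
    -(∫ z in cyl D, Φ z * Lop ε v Φ z)
      = ε ^ 2 * (∫ z in cyl D, (Px z) ^ 2) + ε ^ 2 * (∫ z in cyl D, (Py z) ^ 2)
        + (∫ z in cyl D, (Pe z) ^ 2)
        - ε ^ 2 * ∫ z in cyl D,
            Φ z * ((d1 v (z.1, z.2.1) / (1 + v (z.1, z.2.1))) * Px z
              + (d2 v (z.1, z.2.1) / (1 + v (z.1, z.2.1))) * Py z) := by
  rcases D.eq_empty_or_nonempty with rfl | hDne
  · have hcyl : cyl (∅ : Set (ℝ × ℝ)) = (∅ : Set (ℝ × ℝ × ℝ)) := by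
      ext z; simp [cyl]
    rw [hcyl]
    simp
  have hΩo : IsOpen (cyl D) := cyl_isOpen hD
  have hKcl := closure_cyl D
  have hKc : IsCompact (closure (cyl D)) :=
    Metric.isCompact_of_isClosed_isBounded isClosed_closure (cyl_bounded hDb).closure
  obtain ⟨q0, hq0⟩ := hDne
  have hz0 : ((q0.1, q0.2, (1:ℝ)/2) : ℝ × ℝ × ℝ) ∈ cyl D := by
    refine ⟨?_, by norm_num⟩
    simpa using hq0
  have hDu : UniqueDiffOn ℝ (closure D) := by
    apply uniqueDiffOn_convex hDconv.closure
    exact ⟨q0, interior_mono subset_closure (by rwa [hD.interior_eq])⟩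
  have hKu : UniqueDiffOn ℝ (closure (cyl D)) := by
    apply uniqueDiffOn_convex (cyl_convex hDconv).closure
    exact ⟨_, interior_mono subset_closure (by rwa [hΩo.interior_eq])⟩
  set Fw := fderivWithin ℝ Φ (closure (cyl D)) with hFwdef
  set F2 := fderivWithin ℝ Fw (closure (cyl D)) with hF2def
  set Gw := fderivWithin ℝ v (closure D) with hGwdef
  set G2 := fderivWithin ℝ Gw (closure D) with hG2def
  have hΦd : ∀ z ∈ cyl D, HasFDerivAt Φ (Fw z) z := fun z hz =>
    hasFDerivAt_of_contDiffOn_closure hΩo hΦ hz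
  have hΦd2 : ∀ z ∈ cyl D, HasFDerivAt Fw (F2 z) z := fun z hz =>
    hasFDerivAt_fderivWithin_closure hΩo hΦ hz
  have hsymm : ∀ z ∈ cyl D, ∀ u w : ℝ × ℝ × ℝ, F2 z u w = F2 z w u := fun z hz =>
    snd_deriv_symm hΩo hΦ hz
  have hvd : ∀ q ∈ D, HasFDerivAt v (Gw q) q := fun q hq =>
    hasFDerivAt_of_contDiffOn_closure hD hv hq
  have hvd2 : ∀ q ∈ D, HasFDerivAt Gw (G2 q) q := fun q hq =>
    hasFDerivAt_fderivWithin_closure hD hv hq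
  have hFev : ∀ z ∈ cyl D, ∀ u : ℝ × ℝ × ℝ, HasFDerivAt (fun w => Fw w u)
      ((ContinuousLinearMap.apply ℝ ℝ u).comp (F2 z)) z := fun z hz u =>
    hasFDerivAt_clm_apply' (hΦd2 z hz) u
  have hGev : ∀ q ∈ D, ∀ u : ℝ × ℝ, HasFDerivAt (fun w => Gw w u)
      ((ContinuousLinearMap.apply ℝ ℝ u).comp (G2 q)) q := fun q hq u =>
    hasFDerivAt_clm_apply' (hvd2 q hq) u
  -- first partials
  have hdXPhi : ∀ z ∈ cyl D, dX Φ z = Fw z (1, 0, 0) := by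
    intro z hz; simp only [dX]; exact (hasDerivAt_lineX (hΦd z hz)).deriv
  have hdYPhi : ∀ z ∈ cyl D, dY Φ z = Fw z (0, 1, 0) := by
    intro z hz; simp only [dY]; exact (hasDerivAt_lineY (hΦd z hz)).deriv
  have hdZPhi : ∀ z ∈ cyl D, dZ Φ z = Fw z (0, 0, 1) := by
    intro z hz; simp only [dZ]; exact (hasDerivAt_lineZ (hΦd z hz)).deriv
  have hd1v : ∀ q ∈ D, d1 v q = Gw q (1, 0) := by
    intro q hq; simp only [d1]; exact (hasDerivAt_line1 (hvd q hq)).deriv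
  have hd2v : ∀ q ∈ D, d2 v q = Gw q (0, 1) := by
    intro q hq; simp only [d2]; exact (hasDerivAt_line2 (hvd q hq)).deriv
  -- lines stay in the open set
  have hlineX : ∀ z ∈ cyl D, ∀ᶠ s in nhds z.1, ((s, z.2.1, z.2.2) : ℝ × ℝ × ℝ) ∈ cyl D := by
    intro z hz
    have hco : Continuous (fun s : ℝ => ((s, z.2.1, z.2.2) : ℝ × ℝ × ℝ)) :=
      continuous_id.prodMk continuous_const
    exact (hΩo.preimage hco).mem_nhds (show z.1 ∈ _ from hz)
  have hlineY : ∀ z ∈ cyl D, ∀ᶠ s in nhds z.2.1, ((z.1, s, z.2.2) : ℝ × ℝ × ℝ) ∈ cyl D := by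
    intro z hz
    have hco : Continuous (fun s : ℝ => ((z.1, s, z.2.2) : ℝ × ℝ × ℝ)) :=
      continuous_const.prodMk (continuous_id.prodMk continuous_const)
    exact (hΩo.preimage hco).mem_nhds (show z.2.1 ∈ _ from hz)
  have hlineZ : ∀ z ∈ cyl D, ∀ᶠ s in nhds z.2.2, ((z.1, z.2.1, s) : ℝ × ℝ × ℝ) ∈ cyl D := by
    intro z hz
    have hco : Continuous (fun s : ℝ => ((z.1, z.2.1, s) : ℝ × ℝ × ℝ)) :=
      continuous_const.prodMk (continuous_const.prodMk continuous_id)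
    exact (hΩo.preimage hco).mem_nhds (show z.2.2 ∈ _ from hz)
  have hlineD1 : ∀ q ∈ D, ∀ᶠ s in nhds q.1, ((s, q.2) : ℝ × ℝ) ∈ D := by
    intro q hq
    have hco : Continuous (fun s : ℝ => ((s, q.2) : ℝ × ℝ)) :=
      continuous_id.prodMk continuous_const
    exact (hD.preimage hco).mem_nhds (show q.1 ∈ _ from hq)
  have hlineD2 : ∀ q ∈ D, ∀ᶠ s in nhds q.2, ((q.1, s) : ℝ × ℝ) ∈ D := by
    intro q hq
    have hco : Continuous (fun s : ℝ => ((q.1, s) : ℝ × ℝ)) :=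
      continuous_const.prodMk continuous_id
    exact (hD.preimage hco).mem_nhds (show q.2 ∈ _ from hq)
  have hdXdX : ∀ z ∈ cyl D, dX (dX Φ) z = F2 z (1, 0, 0) (1, 0, 0) := by
    intro z hz
    have hev : (fun s => dX Φ (s, z.2.1, z.2.2)) =ᶠ[nhds z.1] (fun s => Fw (s, z.2.1, z.2.2) (1, 0, 0)) := by
      filter_upwards [hlineX z hz] with s hs
      exact hdXPhi _ hs
    show deriv (fun s => dX Φ (s, z.2.1, z.2.2)) z.1 = _
    rw [hev.deriv_eq]
    have h := (hasDerivAt_lineX (hFev z hz (1, 0, 0))).deriv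
    simpa using h
  have hdYdY : ∀ z ∈ cyl D, dY (dY Φ) z = F2 z (0, 1, 0) (0, 1, 0) := by
    intro z hz
    have hev : (fun s => dY Φ (z.1, s, z.2.2)) =ᶠ[nhds z.2.1] (fun s => Fw (z.1, s, z.2.2) (0, 1, 0)) := by
      filter_upwards [hlineY z hz] with s hs
      exact hdYPhi _ hs
    show deriv (fun s => dY Φ (z.1, s, z.2.2)) z.2.1 = _
    rw [hev.deriv_eq]
    have h := (hasDerivAt_lineY (hFev z hz (0, 1, 0))).deriv
    simpa using h
  have hdZdZ : ∀ z ∈ cyl D, dZ (dZ Φ) z = F2 z (0, 0, 1) (0, 0, 1) := by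
    intro z hz
    have hev : (fun s => dZ Φ (z.1, z.2.1, s)) =ᶠ[nhds z.2.2] (fun s => Fw (z.1, z.2.1, s) (0, 0, 1)) := by
      filter_upwards [hlineZ z hz] with s hs
      exact hdZPhi _ hs
    show deriv (fun s => dZ Φ (z.1, z.2.1, s)) z.2.2 = _
    rw [hev.deriv_eq]
    have h := (hasDerivAt_lineZ (hFev z hz (0, 0, 1))).deriv
    simpa using h
  have hdXdZ : ∀ z ∈ cyl D, dX (dZ Φ) z = F2 z (1, 0, 0) (0, 0, 1) := by
    intro z hz
    have hev : (fun s => dZ Φ (s, z.2.1, z.2.2)) =ᶠ[nhds z.1] (fun s => Fw (s, z.2.1, z.2.2) (0, 0, 1)) := by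
      filter_upwards [hlineX z hz] with s hs
      exact hdZPhi _ hs
    show deriv (fun s => dZ Φ (s, z.2.1, z.2.2)) z.1 = _
    rw [hev.deriv_eq]
    have h := (hasDerivAt_lineX (hFev z hz (0, 0, 1))).deriv
    simpa using h
  have hdYdZ : ∀ z ∈ cyl D, dY (dZ Φ) z = F2 z (0, 1, 0) (0, 0, 1) := by
    intro z hz
    have hev : (fun s => dZ Φ (z.1, s, z.2.2)) =ᶠ[nhds z.2.1] (fun s => Fw (z.1, s, z.2.2) (0, 0, 1)) := by
      filter_upwards [hlineY z hz] with s hs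
      exact hdZPhi _ hs
    show deriv (fun s => dZ Φ (z.1, s, z.2.2)) z.2.1 = _
    rw [hev.deriv_eq]
    have h := (hasDerivAt_lineY (hFev z hz (0, 0, 1))).deriv
    simpa using h
  have hd1d1v : ∀ q ∈ D, d1 (d1 v) q = G2 q (1, 0) (1, 0) := by
    intro q hq
    have hev : (fun s => d1 v (s, q.2)) =ᶠ[nhds q.1] (fun s => Gw (s, q.2) (1, 0)) := by
      filter_upwards [hlineD1 q hq] with s hs
      exact hd1v _ hs
    show deriv (fun s => d1 v (s, q.2)) q.1 = _
    rw [hev.deriv_eq]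
    have h := (hasDerivAt_line1 (hGev q hq (1, 0))).deriv
    simpa using h
  have hd2d2v : ∀ q ∈ D, d2 (d2 v) q = G2 q (0, 1) (0, 1) := by
    intro q hq
    have hev : (fun s => d2 v (q.1, s)) =ᶠ[nhds q.2] (fun s => Gw (q.1, s) (0, 1)) := by
      filter_upwards [hlineD2 q hq] with s hs
      exact hd2v _ hs
    show deriv (fun s => d2 v (q.1, s)) q.2 = _
    rw [hev.deriv_eq]
    have h := (hasDerivAt_line2 (hGev q hq (0, 1))).deriv
    simpa using h
  -- continuity infrastructure on the closed cylinder
  have hπc : Continuous (fun z : ℝ × ℝ × ℝ => ((z.1, z.2.1) : ℝ × ℝ)) :=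
    continuous_fst.prodMk (continuous_fst.comp continuous_snd)
  have hπK : MapsTo (fun z : ℝ × ℝ × ℝ => ((z.1, z.2.1) : ℝ × ℝ)) (closure (cyl D)) (closure D) := by
    intro z hz; rw [hKcl] at hz; exact hz.1
  have hct : ContinuousOn (fun z : ℝ × ℝ × ℝ => z.2.2) (closure (cyl D)) :=
    (continuous_snd.comp continuous_snd).continuousOn
  have hcphi : ContinuousOn Φ (closure (cyl D)) := hΦ.continuousOn
  have hcv : ContinuousOn (fun z : ℝ × ℝ × ℝ => v (z.1, z.2.1)) (closure (cyl D)) :=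
    hv.continuousOn.comp hπc.continuousOn hπK
  have hcV : ContinuousOn (fun z : ℝ × ℝ × ℝ => 1 + v (z.1, z.2.1)) (closure (cyl D)) :=
    continuousOn_const.add hcv
  have hVneK : ∀ z ∈ closure (cyl D), (1 + v (z.1, z.2.1)) ≠ 0 := by
    intro z hz
    have h1 := hv1 _ (hπK hz)
    intro hc; rw [add_comm] at hc
    have : v (z.1, z.2.1) = -1 := by linarith
    linarith
  have hV2neK : ∀ z ∈ closure (cyl D), ((1 + v (z.1, z.2.1)) ^ 2) ≠ 0 := fun z hz =>
    pow_ne_zero 2 (hVneK z hz)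
  have hFwc : ContinuousOn Fw (closure (cyl D)) :=
    hΦ.continuousOn_fderivWithin hKu (by norm_num)
  have hF2c : ContinuousOn F2 (closure (cyl D)) :=
    (hΦ.fderivWithin hKu (by norm_num : (1 : WithTop ℕ∞) + 1 ≤ 2)).continuousOn_fderivWithin hKu (le_refl 1)
  have hGwK : ContinuousOn Gw (closure D) :=
    hv.continuousOn_fderivWithin hDu (by norm_num)
  have hG2K : ContinuousOn G2 (closure D) :=
    (hv.fderivWithin hDu (by norm_num : (1 : WithTop ℕ∞) + 1 ≤ 2)).continuousOn_fderivWithin hDu (le_refl 1)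
  have hca : ContinuousOn (fun z : ℝ × ℝ × ℝ => Gw (z.1, z.2.1) (1, 0)) (closure (cyl D)) :=
    (hGwK.comp hπc.continuousOn hπK).clm_apply continuousOn_const
  have hcb : ContinuousOn (fun z : ℝ × ℝ × ℝ => Gw (z.1, z.2.1) (0, 1)) (closure (cyl D)) :=
    (hGwK.comp hπc.continuousOn hπK).clm_apply continuousOn_const
  have hcvxx : ContinuousOn (fun z : ℝ × ℝ × ℝ => G2 (z.1, z.2.1) (1, 0) (1, 0)) (closure (cyl D)) :=
    ((hG2K.comp hπc.continuousOn hπK).clm_apply continuousOn_const).clm_apply continuousOn_const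
  have hcvyy : ContinuousOn (fun z : ℝ × ℝ × ℝ => G2 (z.1, z.2.1) (0, 1) (0, 1)) (closure (cyl D)) :=
    ((hG2K.comp hπc.continuousOn hπK).clm_apply continuousOn_const).clm_apply continuousOn_const
  have hcp1 : ContinuousOn (fun z : ℝ × ℝ × ℝ => Fw z (1, 0, 0)) (closure (cyl D)) :=
    hFwc.clm_apply continuousOn_const
  have hcp2 : ContinuousOn (fun z : ℝ × ℝ × ℝ => Fw z (0, 1, 0)) (closure (cyl D)) :=
    hFwc.clm_apply continuousOn_const
  have hcp3 : ContinuousOn (fun z : ℝ × ℝ × ℝ => Fw z (0, 0, 1)) (closure (cyl D)) :=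
    hFwc.clm_apply continuousOn_const
  have hcs11 : ContinuousOn (fun z : ℝ × ℝ × ℝ => F2 z (1, 0, 0) (1, 0, 0)) (closure (cyl D)) :=
    (hF2c.clm_apply continuousOn_const).clm_apply continuousOn_const
  have hcs22 : ContinuousOn (fun z : ℝ × ℝ × ℝ => F2 z (0, 1, 0) (0, 1, 0)) (closure (cyl D)) :=
    (hF2c.clm_apply continuousOn_const).clm_apply continuousOn_const
  have hcs33 : ContinuousOn (fun z : ℝ × ℝ × ℝ => F2 z (0, 0, 1) (0, 0, 1)) (closure (cyl D)) :=
    (hF2c.clm_apply continuousOn_const).clm_apply continuousOn_const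
  have hcs13 : ContinuousOn (fun z : ℝ × ℝ × ℝ => F2 z (1, 0, 0) (0, 0, 1)) (closure (cyl D)) :=
    (hF2c.clm_apply continuousOn_const).clm_apply continuousOn_const
  have hcs23 : ContinuousOn (fun z : ℝ × ℝ × ℝ => F2 z (0, 1, 0) (0, 0, 1)) (closure (cyl D)) :=
    (hF2c.clm_apply continuousOn_const).clm_apply continuousOn_const
  have hcs31 : ContinuousOn (fun z : ℝ × ℝ × ℝ => F2 z (0, 0, 1) (1, 0, 0)) (closure (cyl D)) :=
    (hF2c.clm_apply continuousOn_const).clm_apply continuousOn_const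
  have hcs32 : ContinuousOn (fun z : ℝ × ℝ × ℝ => F2 z (0, 0, 1) (0, 1, 0)) (closure (cyl D)) :=
    (hF2c.clm_apply continuousOn_const).clm_apply continuousOn_const
  have intg : ∀ {g : ℝ × ℝ × ℝ → ℝ}, ContinuousOn g (closure (cyl D)) →
      IntegrableOn g (cyl D) volume := fun hg =>
    (ContinuousOn.integrableOn_compact hKc hg).mono_set subset_closure
  have hvanPhi : ∀ z ∈ closure (cyl D), z ∉ cyl D → Φ z = 0 := by
    intro z hzK hzn
    exact hΦ0 z (by rw [hΩo.frontier_eq]; exact ⟨hzK, hzn⟩)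
  have cAX : ContinuousOn (fun z : ℝ × ℝ × ℝ => (Φ z * (Fw z (1, 0, 0) - ((z.2.2 * (Gw (z.1, z.2.1) (1, 0) / (1 + v (z.1, z.2.1)))) * Fw z (0, 0, 1))))) (closure (cyl D)) :=
    (hcphi.mul (hcp1.sub ((hct.mul (hca.div hcV hVneK)).mul hcp3)))
  have cAY : ContinuousOn (fun z : ℝ × ℝ × ℝ => (Φ z * (Fw z (0, 1, 0) - ((z.2.2 * (Gw (z.1, z.2.1) (0, 1) / (1 + v (z.1, z.2.1)))) * Fw z (0, 0, 1))))) (closure (cyl D)) :=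
    (hcphi.mul (hcp2.sub ((hct.mul (hcb.div hcV hVneK)).mul hcp3)))
  have cAZ : ContinuousOn (fun z : ℝ × ℝ × ℝ => (Φ z * (((((1 + (((ε ^ 2) * (z.2.2 ^ 2)) * ((Gw (z.1, z.2.1) (1, 0) ^ 2) + (Gw (z.1, z.2.1) (0, 1) ^ 2)))) / (1 + v (z.1, z.2.1)) ^ 2) * Fw z (0, 0, 1)) - ((((ε ^ 2) * z.2.2) * (Gw (z.1, z.2.1) (1, 0) / (1 + v (z.1, z.2.1)))) * Fw z (1, 0, 0))) - ((((ε ^ 2) * z.2.2) * (Gw (z.1, z.2.1) (0, 1) / (1 + v (z.1, z.2.1)))) * Fw z (0, 1, 0))))) (closure (cyl D)) :=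
    (hcphi.mul (((((continuousOn_const.add (((continuousOn_const.pow 2).mul (hct.pow 2)).mul ((hca.pow 2).add (hcb.pow 2)))).div (hcV.pow 2) hV2neK).mul hcp3).sub ((((continuousOn_const.pow 2).mul hct).mul (hca.div hcV hVneK)).mul hcp1)).sub ((((continuousOn_const.pow 2).mul hct).mul (hcb.div hcV hVneK)).mul hcp2)))
  have cHX : ContinuousOn (fun z : ℝ × ℝ × ℝ => ((Fw z (1, 0, 0) * (Fw z (1, 0, 0) - ((z.2.2 * (Gw (z.1, z.2.1) (1, 0) / (1 + v (z.1, z.2.1)))) * Fw z (0, 0, 1)))) + (Φ z * ((F2 z (1, 0, 0) (1, 0, 0) - ((z.2.2 * (((G2 (z.1, z.2.1) (1, 0) (1, 0) * (1 + v (z.1, z.2.1))) - (Gw (z.1, z.2.1) (1, 0) * Gw (z.1, z.2.1) (1, 0))) / (1 + v (z.1, z.2.1)) ^ 2)) * Fw z (0, 0, 1))) - ((z.2.2 * (Gw (z.1, z.2.1) (1, 0) / (1 + v (z.1, z.2.1)))) * F2 z (1, 0, 0) (0, 0, 1)))))) (closure (cyl D)) :=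
    ((hcp1.mul (hcp1.sub ((hct.mul (hca.div hcV hVneK)).mul hcp3))).add (hcphi.mul ((hcs11.sub ((hct.mul (((hcvxx.mul hcV).sub (hca.mul hca)).div (hcV.pow 2) hV2neK)).mul hcp3)).sub ((hct.mul (hca.div hcV hVneK)).mul hcs13))))
  have cHY : ContinuousOn (fun z : ℝ × ℝ × ℝ => ((Fw z (0, 1, 0) * (Fw z (0, 1, 0) - ((z.2.2 * (Gw (z.1, z.2.1) (0, 1) / (1 + v (z.1, z.2.1)))) * Fw z (0, 0, 1)))) + (Φ z * ((F2 z (0, 1, 0) (0, 1, 0) - ((z.2.2 * (((G2 (z.1, z.2.1) (0, 1) (0, 1) * (1 + v (z.1, z.2.1))) - (Gw (z.1, z.2.1) (0, 1) * Gw (z.1, z.2.1) (0, 1))) / (1 + v (z.1, z.2.1)) ^ 2)) * Fw z (0, 0, 1))) - ((z.2.2 * (Gw (z.1, z.2.1) (0, 1) / (1 + v (z.1, z.2.1)))) * F2 z (0, 1, 0) (0, 0, 1)))))) (closure (cyl D)) :=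
    ((hcp2.mul (hcp2.sub ((hct.mul (hcb.div hcV hVneK)).mul hcp3))).add (hcphi.mul ((hcs22.sub ((hct.mul (((hcvyy.mul hcV).sub (hcb.mul hcb)).div (hcV.pow 2) hV2neK)).mul hcp3)).sub ((hct.mul (hcb.div hcV hVneK)).mul hcs23))))
  have cHZ : ContinuousOn (fun z : ℝ × ℝ × ℝ => ((Fw z (0, 0, 1) * (((((1 + (((ε ^ 2) * (z.2.2 ^ 2)) * ((Gw (z.1, z.2.1) (1, 0) ^ 2) + (Gw (z.1, z.2.1) (0, 1) ^ 2)))) / (1 + v (z.1, z.2.1)) ^ 2) * Fw z (0, 0, 1)) - ((((ε ^ 2) * z.2.2) * (Gw (z.1, z.2.1) (1, 0) / (1 + v (z.1, z.2.1)))) * Fw z (1, 0, 0))) - ((((ε ^ 2) * z.2.2) * (Gw (z.1, z.2.1) (0, 1) / (1 + v (z.1, z.2.1)))) * Fw z (0, 1, 0)))) + (Φ z * (((((((((((ε ^ 2) * 2) * z.2.2) * ((Gw (z.1, z.2.1) (1, 0) ^ 2) + (Gw (z.1, z.2.1) (0, 1) ^ 2))) / (1 + v (z.1, z.2.1)) ^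 2) * Fw z (0, 0, 1)) + (((1 + (((ε ^ 2) * (z.2.2 ^ 2)) * ((Gw (z.1, z.2.1) (1, 0) ^ 2) + (Gw (z.1, z.2.1) (0, 1) ^ 2)))) / (1 + v (z.1, z.2.1)) ^ 2) * F2 z (0, 0, 1) (0, 0, 1))) - (((ε ^ 2) * (Gw (z.1, z.2.1) (1, 0) / (1 + v (z.1, z.2.1)))) * Fw z (1, 0, 0))) - ((((ε ^ 2) * z.2.2) * (Gw (z.1, z.2.1) (1, 0) / (1 + v (z.1, z.2.1)))) * F2 z (0, 0, 1) (1, 0, 0))) - (((ε ^ 2) * (Gw (z.1, z.2.1) (0, 1) / (1 + v (z.1, z.2.1)))) * Fw z (0, 1, 0))) - ((((ε ^ 2) * z.2.2) * (Gw (z.1, z.2.1) (0, 1) / (1 + v (z.1, z.2.1)))) * F2 z (0, 0, 1) (0, 1, 0)))))) (closure (cyl D)) :=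
    ((hcp3.mul (((((continuousOn_const.add (((continuousOn_const.pow 2).mul (hct.pow 2)).mul ((hca.pow 2).add (hcb.pow 2)))).div (hcV.pow 2) hV2neK).mul hcp3).sub ((((continuousOn_const.pow 2).mul hct).mul (hca.div hcV hVneK)).mul hcp1)).sub ((((continuousOn_const.pow 2).mul hct).mul (hcb.div hcV hVneK)).mul hcp2))).add (hcphi.mul (((((((((((continuousOn_const.pow 2).mul continuousOn_const).mul hct).mul ((hca.pow 2).add (hcb.pow 2))).div (hcV.pow 2) hV2neK).mul hcp3).add (((continuousOn_const.add (((continuousOn_const.pow 2).mul (hct.pow 2)).mul ((hca.pow 2).add (hcb.pow 2)))).div (hcV.pow 2) hV2neK).mul hcs33)).sub (((continuousOn_const.pow 2).mul (hca.div hcV hVneK)).mul hcp1)).sub ((((continuousOn_const.pow 2).mul hct).mul (hca.div hcV hVneK)).mul hcs31)).sub (((continuousOn_const.pow 2).mul (hcb.div hcV hVneK)).mul hcp2)).sub ((((continuousOn_const.pow 2).mul hct).mul (hcb.div hcV hVneK)).mul hcs32))))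
  have cg0 : ContinuousOn (fun z : ℝ × ℝ × ℝ => (Φ z * (((((((ε ^ 2) * F2 z (1, 0, 0) (1, 0, 0)) + ((ε ^ 2) * F2 z (0, 1, 0) (0, 1, 0))) - ((((2 * (ε ^ 2)) * z.2.2) * (Gw (z.1, z.2.1) (1, 0) / (1 + v (z.1, z.2.1)))) * F2 z (1, 0, 0) (0, 0, 1))) - ((((2 * (ε ^ 2)) * z.2.2) * (Gw (z.1, z.2.1) (0, 1) / (1 + v (z.1, z.2.1)))) * F2 z (0, 1, 0) (0, 0, 1))) + (((1 + (((ε ^ 2) * (z.2.2 ^ 2)) * ((Gw (z.1, z.2.1) (1, 0) ^ 2) + (Gw (z.1, z.2.1) (0, 1) ^ 2)))) / (1 + v (z.1, z.2.1)) ^ 2) * F2 z (0, 0, 1) (0, 0, 1))) + ((((ε ^ 2) * z.2.2) * (((2 * ((Gw (z.1, z.2.1) (1, 0) ^ 2) + (Gw (z.1, z.2.1) (0, 1) ^ 2))) / (1 + v (z.1, z.2.1)) ^ 2) - ((G2 (z.1, z.2.1) (1, 0) (1, 0) + G2 (z.1, z.2.1) (0, 1) (0, 1)) / (1 + v (z.1,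 z.2.1))))) * Fw z (0, 0, 1))))) (closure (cyl D)) :=
    (hcphi.mul (((((((continuousOn_const.pow 2).mul hcs11).add ((continuousOn_const.pow 2).mul hcs22)).sub ((((continuousOn_const.mul (continuousOn_const.pow 2)).mul hct).mul (hca.div hcV hVneK)).mul hcs13)).sub ((((continuousOn_const.mul (continuousOn_const.pow 2)).mul hct).mul (hcb.div hcV hVneK)).mul hcs23)).add (((continuousOn_const.add (((continuousOn_const.pow 2).mul (hct.pow 2)).mul ((hca.pow 2).add (hcb.pow 2)))).div (hcV.pow 2) hV2neK).mul hcs33)).add ((((continuousOn_const.pow 2).mul hct).mul (((continuousOn_const.mul ((hca.pow 2).add (hcb.pow 2))).div (hcV.pow 2) hV2neK).sub ((hcvxx.add hcvyy).div hcV hVneK))).mul hcp3)))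
  have cg1 : ContinuousOn (fun z : ℝ × ℝ × ℝ => ((Fw z (1, 0, 0) - ((z.2.2 * (Gw (z.1, z.2.1) (1, 0) / (1 + v (z.1, z.2.1)))) * Fw z (0, 0, 1))) ^ 2)) (closure (cyl D)) :=
    ((hcp1.sub ((hct.mul (hca.div hcV hVneK)).mul hcp3)).pow 2)
  have cg2 : ContinuousOn (fun z : ℝ × ℝ × ℝ => ((Fw z (0, 1, 0) - ((z.2.2 * (Gw (z.1, z.2.1) (0, 1) / (1 + v (z.1, z.2.1)))) * Fw z (0, 0, 1))) ^ 2)) (closure (cyl D)) :=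
    ((hcp2.sub ((hct.mul (hcb.div hcV hVneK)).mul hcp3)).pow 2)
  have cg3 : ContinuousOn (fun z : ℝ × ℝ × ℝ => ((Fw z (0, 0, 1) / (1 + v (z.1, z.2.1))) ^ 2)) (closure (cyl D)) :=
    ((hcp3.div hcV hVneK).pow 2)
  have cg4 : ContinuousOn (fun z : ℝ × ℝ × ℝ => (Φ z * (((Gw (z.1, z.2.1) (1, 0) / (1 + v (z.1, z.2.1))) * (Fw z (1, 0, 0) - ((z.2.2 * (Gw (z.1, z.2.1) (1, 0) / (1 + v (z.1, z.2.1)))) * Fw z (0, 0, 1)))) + ((Gw (z.1, z.2.1) (0, 1) / (1 + v (z.1, z.2.1))) * (Fw z (0, 1, 0) - ((z.2.2 * (Gw (z.1, z.2.1) (0, 1) / (1 + v (z.1, z.2.1)))) * Fw z (0, 0, 1))))))) (closure (cyl D)) :=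
    (hcphi.mul (((hca.div hcV hVneK).mul (hcp1.sub ((hct.mul (hca.div hcV hVneK)).mul hcp3))).add ((hcb.div hcV hVneK).mul (hcp2.sub ((hct.mul (hcb.div hcV hVneK)).mul hcp3)))))
  have vanAX : ∀ z ∈ closure (cyl D), z ∉ cyl D → (fun z : ℝ × ℝ × ℝ => (Φ z * (Fw z (1, 0, 0) - ((z.2.2 * (Gw (z.1, z.2.1) (1, 0) / (1 + v (z.1, z.2.1)))) * Fw z (0, 0, 1))))) z = 0 := by
    intro z hzK hzn
    show Φ z * _ = 0
    rw [hvanPhi z hzK hzn, zero_mul]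
  have vanAY : ∀ z ∈ closure (cyl D), z ∉ cyl D → (fun z : ℝ × ℝ × ℝ => (Φ z * (Fw z (0, 1, 0) - ((z.2.2 * (Gw (z.1, z.2.1) (0, 1) / (1 + v (z.1, z.2.1)))) * Fw z (0, 0, 1))))) z = 0 := by
    intro z hzK hzn
    show Φ z * _ = 0
    rw [hvanPhi z hzK hzn, zero_mul]
  have vanAZ : ∀ z ∈ closure (cyl D), z ∉ cyl D → (fun z : ℝ × ℝ × ℝ => (Φ z * (((((1 + (((ε ^ 2) * (z.2.2 ^ 2)) * ((Gw (z.1, z.2.1) (1, 0) ^ 2) + (Gw (z.1, z.2.1) (0, 1) ^ 2)))) / (1 + v (z.1, z.2.1)) ^ 2) * Fw z (0, 0, 1)) - ((((ε ^ 2) * z.2.2) * (Gw (z.1, z.2.1) (1, 0) / (1 + v (z.1, z.2.1)))) * Fw z (1, 0, 0))) - ((((ε ^ 2) * z.2.2) * (Gw (z.1, z.2.1) (0, 1) / (1 + v (z.1, z.2.1)))) * Fw z (0, 1, 0))))) z = 0 := by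
    intro z hzK hzn
    show Φ z * _ = 0
    rw [hvanPhi z hzK hzn, zero_mul]
  have derX : ∀ z ∈ cyl D, HasDerivAt (fun s => (Φ (s, z.2.1, z.2.2) * (Fw (s, z.2.1, z.2.2) (1, 0, 0) - ((z.2.2 * (Gw (s, z.2.1) (1, 0) / (1 + v (s, z.2.1)))) * Fw (s, z.2.1, z.2.2) (0, 0, 1))))) (((Fw z (1, 0, 0) * (Fw z (1, 0, 0) - ((z.2.2 * (Gw (z.1, z.2.1) (1, 0) / (1 + v (z.1, z.2.1)))) * Fw z (0, 0, 1)))) + (Φ z * ((F2 z (1, 0, 0) (1, 0, 0) - ((z.2.2 * (((G2 (z.1, z.2.1) (1, 0) (1, 0) * (1 + v (z.1, z.2.1))) - (Gw (z.1, z.2.1) (1, 0) * Gw (z.1, z.2.1) (1, 0))) / (1 + v (z.1, z.2.1)) ^ 2)) * Fw z (0, 0, 1))) - ((z.2.2 * (Gw (z.1, z.2.1) (1, 0) / (1 + v (z.1, z.2.1)))) * F2 z (1, 0, 0) (0, 0, 1)))))) z.1 := by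
    intro z hz
    have hq : (z.1, z.2.1) ∈ D := hz.1
    have hVpos : 0 < 1 + v (z.1, z.2.1) := by
      have := hv1 _ (subset_closure hq); linarith
    have hphid := hasDerivAt_lineX (hΦd z hz)
    have hp1d : HasDerivAt (fun s => Fw (s, z.2.1, z.2.2) (1, 0, 0)) (F2 z (1, 0, 0) (1, 0, 0)) z.1 := by
      have h := hasDerivAt_lineX (hFev z hz (1, 0, 0)); simpa using h
    have hp3d : HasDerivAt (fun s => Fw (s, z.2.1, z.2.2) (0, 0, 1)) (F2 z (1, 0, 0) (0, 0, 1)) z.1 := by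
      have h := hasDerivAt_lineX (hFev z hz (0, 0, 1)); simpa using h
    have hvad : HasDerivAt (fun s => Gw (s, z.2.1) (1, 0)) (G2 (z.1, z.2.1) (1, 0) (1, 0)) z.1 := by
      have h := hasDerivAt_line1 (hGev (z.1, z.2.1) hq (1, 0)); simpa using h
    have hVd : HasDerivAt (fun s => 1 + v (s, z.2.1)) (Gw (z.1, z.2.1) (1, 0)) z.1 :=
      (hasDerivAt_line1 (hvd (z.1, z.2.1) hq)).const_add 1
    have hfrac := hvad.div hVd (ne_of_gt hVpos)
    have hh := hphid.mul (hp1d.sub ((hfrac.const_mul z.2.2).mul hp3d))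
    refine hh.congr_deriv ?_
    simp only [Pi.mul_apply, Pi.sub_apply, Pi.add_apply, Pi.div_apply, Prod.mk.eta]
    ring
  have derY : ∀ z ∈ cyl D, HasDerivAt (fun s => (Φ (z.1, s, z.2.2) * (Fw (z.1, s, z.2.2) (0, 1, 0) - ((z.2.2 * (Gw (z.1, s) (0, 1) / (1 + v (z.1, s)))) * Fw (z.1, s, z.2.2) (0, 0, 1))))) (((Fw z (0, 1, 0) * (Fw z (0, 1, 0) - ((z.2.2 * (Gw (z.1, z.2.1) (0, 1) / (1 + v (z.1, z.2.1)))) * Fw z (0, 0, 1)))) + (Φ z * ((F2 z (0, 1, 0) (0, 1, 0) - ((z.2.2 * (((G2 (z.1, z.2.1) (0, 1) (0, 1) * (1 + v (z.1, z.2.1))) - (Gw (z.1, z.2.1) (0, 1) * Gw (z.1, z.2.1) (0, 1))) / (1 + v (z.1, z.2.1)) ^ 2)) * Fw z (0, 0, 1))) - ((z.2.2 * (Gw (z.1, z.2.1) (0, 1) / (1 + v (z.1, z.2.1)))) * F2 z (0, 1, 0) (0, 0, 1)))))) z.2.1 := by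
    intro z hz
    have hq : (z.1, z.2.1) ∈ D := hz.1
    have hVpos : 0 < 1 + v (z.1, z.2.1) := by
      have := hv1 _ (subset_closure hq); linarith
    have hphid := hasDerivAt_lineY (hΦd z hz)
    have hp2d : HasDerivAt (fun s => Fw (z.1, s, z.2.2) (0, 1, 0)) (F2 z (0, 1, 0) (0, 1, 0)) z.2.1 := by
      have h := hasDerivAt_lineY (hFev z hz (0, 1, 0)); simpa using h
    have hp3d : HasDerivAt (fun s => Fw (z.1, s, z.2.2) (0, 0, 1)) (F2 z (0, 1, 0) (0, 0, 1)) z.2.1 := by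
      have h := hasDerivAt_lineY (hFev z hz (0, 0, 1)); simpa using h
    have hvbd : HasDerivAt (fun s => Gw (z.1, s) (0, 1)) (G2 (z.1, z.2.1) (0, 1) (0, 1)) z.2.1 := by
      have h := hasDerivAt_line2 (hGev (z.1, z.2.1) hq (0, 1)); simpa using h
    have hVd : HasDerivAt (fun s => 1 + v (z.1, s)) (Gw (z.1, z.2.1) (0, 1)) z.2.1 :=
      (hasDerivAt_line2 (hvd (z.1, z.2.1) hq)).const_add 1
    have hfrac := hvbd.div hVd (ne_of_gt hVpos)
    have hh := hphid.mul (hp2d.sub ((hfrac.const_mul z.2.2).mul hp3d))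
    refine hh.congr_deriv ?_
    simp only [Pi.mul_apply, Pi.sub_apply, Pi.add_apply, Pi.div_apply, Prod.mk.eta]
    ring
  have derZ : ∀ z ∈ cyl D, HasDerivAt (fun s => (Φ (z.1, z.2.1, s) * (((((1 + (((ε ^ 2) * (s ^ 2)) * ((Gw (z.1, z.2.1) (1, 0) ^ 2) + (Gw (z.1, z.2.1) (0, 1) ^ 2)))) / (1 + v (z.1, z.2.1)) ^ 2) * Fw (z.1, z.2.1, s) (0, 0, 1)) - ((((ε ^ 2) * s) * (Gw (z.1, z.2.1) (1, 0) / (1 + v (z.1, z.2.1)))) * Fw (z.1, z.2.1, s) (1, 0, 0))) - ((((ε ^ 2) * s) * (Gw (z.1, z.2.1) (0, 1) / (1 + v (z.1, z.2.1)))) * Fw (z.1, z.2.1, s) (0, 1, 0))))) (((Fw z (0, 0, 1) * (((((1 + (((ε ^ 2) * (z.2.2 ^ 2)) * ((Gw (z.1, z.2.1) (1, 0) ^ 2) + (Gw (z.1, z.2.1) (0, 1) ^ 2)))) / (1 + v (z.1, z.2.1)) ^ 2) * Fw z (0, 0, 1)) - ((((ε ^ 2) * z.2.2) * (Gw (z.1,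 z.2.1) (1, 0) / (1 + v (z.1, z.2.1)))) * Fw z (1, 0, 0))) - ((((ε ^ 2) * z.2.2) * (Gw (z.1, z.2.1) (0, 1) / (1 + v (z.1, z.2.1)))) * Fw z (0, 1, 0)))) + (Φ z * (((((((((((ε ^ 2) * 2) * z.2.2) * ((Gw (z.1, z.2.1) (1, 0) ^ 2) + (Gw (z.1, z.2.1) (0, 1) ^ 2))) / (1 + v (z.1, z.2.1)) ^ 2) * Fw z (0, 0, 1)) + (((1 + (((ε ^ 2) * (z.2.2 ^ 2)) * ((Gw (z.1, z.2.1) (1, 0) ^ 2) + (Gw (z.1, z.2.1) (0, 1) ^ 2)))) / (1 + v (z.1, z.2.1)) ^ 2) * F2 z (0, 0, 1) (0, 0, 1))) - (((ε ^ 2) * (Gw (z.1, z.2.1) (1, 0) / (1 + v (z.1, z.2.1)))) * Fw z (1, 0, 0))) - ((((ε ^ 2) * z.2.2) * (Gw (z.1, z.2.1) (1, 0) / (1 + v (z.1, z.2.1)))) * F2 z (0, 0, 1) (1, 0, 0))) - (((ε ^ 2) * (Gw (z.1, z.2.1) (0, 1) / (1 + v (z.1, z.2.1)))) * Fw z (0,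 1, 0))) - ((((ε ^ 2) * z.2.2) * (Gw (z.1, z.2.1) (0, 1) / (1 + v (z.1, z.2.1)))) * F2 z (0, 0, 1) (0, 1, 0)))))) z.2.2 := by
    intro z hz
    have hq : (z.1, z.2.1) ∈ D := hz.1
    have hphid := hasDerivAt_lineZ (hΦd z hz)
    have hp1d : HasDerivAt (fun s => Fw (z.1, z.2.1, s) (1, 0, 0)) (F2 z (0, 0, 1) (1, 0, 0)) z.2.2 := by
      have h := hasDerivAt_lineZ (hFev z hz (1, 0, 0)); simpa using h
    have hp2d : HasDerivAt (fun s => Fw (z.1, z.2.1, s) (0, 1, 0)) (F2 z (0, 0, 1) (0, 1, 0)) z.2.2 := by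
      have h := hasDerivAt_lineZ (hFev z hz (0, 1, 0)); simpa using h
    have hp3d : HasDerivAt (fun s => Fw (z.1, z.2.1, s) (0, 0, 1)) (F2 z (0, 0, 1) (0, 0, 1)) z.2.2 := by
      have h := hasDerivAt_lineZ (hFev z hz (0, 0, 1)); simpa using h
    have hpow := hasDerivAt_pow 2 z.2.2
    have hc1d := (((hpow.const_mul (ε ^ 2)).mul_const
        ((Gw (z.1, z.2.1) (1, 0) ^ 2) + (Gw (z.1, z.2.1) (0, 1) ^ 2))).const_add 1).div_const
        ((1 + v (z.1, z.2.1)) ^ 2)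
    have hc2d : HasDerivAt (fun s : ℝ => (ε ^ 2) * s) (ε ^ 2) z.2.2 := by
      simpa using (hasDerivAt_id z.2.2).const_mul (ε ^ 2)
    have hh := hphid.mul (((hc1d.mul hp3d).sub
      ((hc2d.mul_const (Gw (z.1, z.2.1) (1, 0) / (1 + v (z.1, z.2.1)))).mul hp1d)).sub
      ((hc2d.mul_const (Gw (z.1, z.2.1) (0, 1) / (1 + v (z.1, z.2.1)))).mul hp2d))
    refine hh.congr_deriv ?_
    simp only [Pi.mul_apply, Pi.sub_apply, Pi.add_apply, Pi.div_apply, Prod.mk.eta]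
    ring
  have I1 : ∫ z in cyl D, ((Fw z (1, 0, 0) * (Fw z (1, 0, 0) - ((z.2.2 * (Gw (z.1, z.2.1) (1, 0) / (1 + v (z.1, z.2.1)))) * Fw z (0, 0, 1)))) + (Φ z * ((F2 z (1, 0, 0) (1, 0, 0) - ((z.2.2 * (((G2 (z.1, z.2.1) (1, 0) (1, 0) * (1 + v (z.1, z.2.1))) - (Gw (z.1, z.2.1) (1, 0) * Gw (z.1, z.2.1) (1, 0))) / (1 + v (z.1, z.2.1)) ^ 2)) * Fw z (0, 0, 1))) - ((z.2.2 * (Gw (z.1, z.2.1) (1, 0) / (1 + v (z.1, z.2.1)))) * F2 z (1, 0, 0) (0, 0, 1))))) = 0 :=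
    fluxX_zero hD hDb hDconv cAX cHX vanAX derX
  have I2 : ∫ z in cyl D, ((Fw z (0, 1, 0) * (Fw z (0, 1, 0) - ((z.2.2 * (Gw (z.1, z.2.1) (0, 1) / (1 + v (z.1, z.2.1)))) * Fw z (0, 0, 1)))) + (Φ z * ((F2 z (0, 1, 0) (0, 1, 0) - ((z.2.2 * (((G2 (z.1, z.2.1) (0, 1) (0, 1) * (1 + v (z.1, z.2.1))) - (Gw (z.1, z.2.1) (0, 1) * Gw (z.1, z.2.1) (0, 1))) / (1 + v (z.1, z.2.1)) ^ 2)) * Fw z (0, 0, 1))) - ((z.2.2 * (Gw (z.1, z.2.1) (0, 1) / (1 + v (z.1, z.2.1)))) * F2 z (0, 1, 0) (0, 0, 1))))) = 0 :=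
    fluxY_zero hD hDb hDconv cAY cHY vanAY derY
  have I3 : ∫ z in cyl D, ((Fw z (0, 0, 1) * (((((1 + (((ε ^ 2) * (z.2.2 ^ 2)) * ((Gw (z.1, z.2.1) (1, 0) ^ 2) + (Gw (z.1, z.2.1) (0, 1) ^ 2)))) / (1 + v (z.1, z.2.1)) ^ 2) * Fw z (0, 0, 1)) - ((((ε ^ 2) * z.2.2) * (Gw (z.1, z.2.1) (1, 0) / (1 + v (z.1, z.2.1)))) * Fw z (1, 0, 0))) - ((((ε ^ 2) * z.2.2) * (Gw (z.1, z.2.1) (0, 1) / (1 + v (z.1, z.2.1)))) * Fw z (0, 1, 0)))) + (Φ z * (((((((((((ε ^ 2) * 2) * z.2.2) * ((Gw (z.1, z.2.1) (1, 0) ^ 2) + (Gw (z.1, z.2.1) (0, 1) ^ 2))) / (1 + v (z.1, z.2.1)) ^ 2) * Fw z (0, 0, 1)) + (((1 + (((ε ^ 2) * (z.2.2 ^ 2)) * ((Gw (z.1, z.2.1) (1, 0) ^ 2) + (Gw (z.1, z.2.1) (0, 1) ^ 2)))) / (1 + v (z.1, z.2.1)) ^ 2) * F2 z (0, 0, 1)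 (0, 0, 1))) - (((ε ^ 2) * (Gw (z.1, z.2.1) (1, 0) / (1 + v (z.1, z.2.1)))) * Fw z (1, 0, 0))) - ((((ε ^ 2) * z.2.2) * (Gw (z.1, z.2.1) (1, 0) / (1 + v (z.1, z.2.1)))) * F2 z (0, 0, 1) (1, 0, 0))) - (((ε ^ 2) * (Gw (z.1, z.2.1) (0, 1) / (1 + v (z.1, z.2.1)))) * Fw z (0, 1, 0))) - ((((ε ^ 2) * z.2.2) * (Gw (z.1, z.2.1) (0, 1) / (1 + v (z.1, z.2.1)))) * F2 z (0, 0, 1) (0, 1, 0))))) = 0 :=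
    fluxZ_zero hD hDb cAZ cHZ vanAZ derZ
  have hg0eq : ∀ z ∈ cyl D, Φ z * Lop ε v Φ z = (Φ z * (((((((ε ^ 2) * F2 z (1, 0, 0) (1, 0, 0)) + ((ε ^ 2) * F2 z (0, 1, 0) (0, 1, 0))) - ((((2 * (ε ^ 2)) * z.2.2) * (Gw (z.1, z.2.1) (1, 0) / (1 + v (z.1, z.2.1)))) * F2 z (1, 0, 0) (0, 0, 1))) - ((((2 * (ε ^ 2)) * z.2.2) * (Gw (z.1, z.2.1) (0, 1) / (1 + v (z.1, z.2.1)))) * F2 z (0, 1, 0) (0, 0, 1))) + (((1 + (((ε ^ 2) * (z.2.2 ^ 2)) * ((Gw (z.1, z.2.1) (1, 0) ^ 2) + (Gw (z.1, z.2.1) (0, 1) ^ 2)))) / (1 + v (z.1, z.2.1)) ^ 2) * F2 z (0, 0, 1) (0, 0, 1))) + ((((ε ^ 2) * z.2.2) * (((2 * ((Gw (z.1, z.2.1) (1, 0) ^ 2) + (Gw (z.1, z.2.1) (0, 1) ^ 2))) / (1 + v (z.1, z.2.1)) ^ 2) - ((G2 (z.1, z.2.1) (1, 0) (1, 0) + G2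 (z.1, z.2.1) (0, 1) (0, 1)) / (1 + v (z.1, z.2.1))))) * Fw z (0, 0, 1)))) := by
    intro z hz
    have hq : (z.1, z.2.1) ∈ D := hz.1
    simp only [Lop, gradSq, lap]
    rw [hdXdX z hz, hdYdY z hz, hdXdZ z hz, hdYdZ z hz, hdZdZ z hz, hdZPhi z hz,
      hd1d1v _ hq, hd2d2v _ hq, hd1v _ hq, hd2v _ hq]
  have hg1eq : ∀ z ∈ cyl D, (Px z) ^ 2 = ((Fw z (1, 0, 0) - ((z.2.2 * (Gw (z.1, z.2.1) (1, 0) / (1 + v (z.1, z.2.1)))) * Fw z (0, 0, 1))) ^ 2) := by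
    intro z hz
    rw [hPx z, hdXPhi z hz, hdZPhi z hz, hd1v _ hz.1]
  have hg2eq : ∀ z ∈ cyl D, (Py z) ^ 2 = ((Fw z (0, 1, 0) - ((z.2.2 * (Gw (z.1, z.2.1) (0, 1) / (1 + v (z.1, z.2.1)))) * Fw z (0, 0, 1))) ^ 2) := by
    intro z hz
    rw [hPy z, hdYPhi z hz, hdZPhi z hz, hd2v _ hz.1]
  have hg3eq : ∀ z ∈ cyl D, (Pe z) ^ 2 = ((Fw z (0, 0, 1) / (1 + v (z.1, z.2.1))) ^ 2) := by
    intro z hz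
    rw [hPe z, hdZPhi z hz]
  have hg4eq : ∀ z ∈ cyl D, Φ z * ((d1 v (z.1, z.2.1) / (1 + v (z.1, z.2.1))) * Px z
      + (d2 v (z.1, z.2.1) / (1 + v (z.1, z.2.1))) * Py z) = (Φ z * (((Gw (z.1, z.2.1) (1, 0) / (1 + v (z.1, z.2.1))) * (Fw z (1, 0, 0) - ((z.2.2 * (Gw (z.1, z.2.1) (1, 0) / (1 + v (z.1, z.2.1)))) * Fw z (0, 0, 1)))) + ((Gw (z.1, z.2.1) (0, 1) / (1 + v (z.1, z.2.1))) * (Fw z (0, 1, 0) - ((z.2.2 * (Gw (z.1, z.2.1) (0, 1) / (1 + v (z.1, z.2.1)))) * Fw z (0, 0, 1)))))) := by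
    intro z hz
    rw [hPx z, hPy z, hd1v _ hz.1, hd2v _ hz.1, hdXPhi z hz, hdYPhi z hz, hdZPhi z hz]
  have halg : ∀ z ∈ cyl D, ((Φ z * (((((((ε ^ 2) * F2 z (1, 0, 0) (1, 0, 0)) + ((ε ^ 2) * F2 z (0, 1, 0) (0, 1, 0))) - ((((2 * (ε ^ 2)) * z.2.2) * (Gw (z.1, z.2.1) (1, 0) / (1 + v (z.1, z.2.1)))) * F2 z (1, 0, 0) (0, 0, 1))) - ((((2 * (ε ^ 2)) * z.2.2) * (Gw (z.1, z.2.1) (0, 1) / (1 + v (z.1, z.2.1)))) * F2 z (0, 1, 0) (0, 0, 1))) + (((1 + (((ε ^ 2) * (z.2.2 ^ 2)) * ((Gw (z.1, z.2.1) (1, 0) ^ 2) + (Gw (z.1, z.2.1) (0, 1) ^ 2)))) / (1 + v (z.1, z.2.1)) ^ 2) * F2 z (0, 0, 1) (0, 0, 1))) + ((((ε ^ 2) * z.2.2) * (((2 * ((Gw (z.1, z.2.1) (1, 0) ^ 2) + (Gw (z.1, z.2.1) (0, 1) ^ 2))) / (1 + v (z.1, z.2.1)) ^ 2) - ((G2 (z.1,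 z.2.1) (1, 0) (1, 0) + G2 (z.1, z.2.1) (0, 1) (0, 1)) / (1 + v (z.1, z.2.1))))) * Fw z (0, 0, 1)))) + ε ^ 2 * ((Fw z (1, 0, 0) - ((z.2.2 * (Gw (z.1, z.2.1) (1, 0) / (1 + v (z.1, z.2.1)))) * Fw z (0, 0, 1))) ^ 2) + ε ^ 2 * ((Fw z (0, 1, 0) - ((z.2.2 * (Gw (z.1, z.2.1) (0, 1) / (1 + v (z.1, z.2.1)))) * Fw z (0, 0, 1))) ^ 2) + ((Fw z (0, 0, 1) / (1 + v (z.1, z.2.1))) ^ 2) - ε ^ 2 * (Φ z * (((Gw (z.1, z.2.1) (1, 0) / (1 + v (z.1, z.2.1))) * (Fw z (1, 0, 0) - ((z.2.2 * (Gw (z.1, z.2.1) (1, 0) / (1 + v (z.1, z.2.1)))) * Fw z (0, 0, 1)))) + ((Gw (z.1, z.2.1) (0, 1) / (1 + v (z.1, z.2.1))) * (Fw z (0, 1, 0) - ((z.2.2 * (Gw (z.1, z.2.1) (0, 1) / (1 + v (z.1, z.2.1)))) * Fw z (0, 0, 1))))))) = (ε ^ 2 * ((Fw z (1, 0, 0)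 * (Fw z (1, 0, 0) - ((z.2.2 * (Gw (z.1, z.2.1) (1, 0) / (1 + v (z.1, z.2.1)))) * Fw z (0, 0, 1)))) + (Φ z * ((F2 z (1, 0, 0) (1, 0, 0) - ((z.2.2 * (((G2 (z.1, z.2.1) (1, 0) (1, 0) * (1 + v (z.1, z.2.1))) - (Gw (z.1, z.2.1) (1, 0) * Gw (z.1, z.2.1) (1, 0))) / (1 + v (z.1, z.2.1)) ^ 2)) * Fw z (0, 0, 1))) - ((z.2.2 * (Gw (z.1, z.2.1) (1, 0) / (1 + v (z.1, z.2.1)))) * F2 z (1, 0, 0) (0, 0, 1))))) + ε ^ 2 * ((Fw z (0, 1, 0) * (Fw z (0, 1, 0) - ((z.2.2 * (Gw (z.1, z.2.1) (0, 1) / (1 + v (z.1, z.2.1)))) * Fw z (0, 0, 1)))) + (Φ z * ((F2 z (0, 1, 0) (0, 1, 0) - ((z.2.2 * (((G2 (z.1, z.2.1) (0, 1) (0, 1) * (1 + v (z.1, z.2.1))) - (Gw (z.1, z.2.1) (0, 1) * Gw (z.1, z.2.1) (0, 1))) / (1 + v (z.1, z.2.1)) ^ 2)) * Fw z (0, 0,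 1))) - ((z.2.2 * (Gw (z.1, z.2.1) (0, 1) / (1 + v (z.1, z.2.1)))) * F2 z (0, 1, 0) (0, 0, 1))))) + ((Fw z (0, 0, 1) * (((((1 + (((ε ^ 2) * (z.2.2 ^ 2)) * ((Gw (z.1, z.2.1) (1, 0) ^ 2) + (Gw (z.1, z.2.1) (0, 1) ^ 2)))) / (1 + v (z.1, z.2.1)) ^ 2) * Fw z (0, 0, 1)) - ((((ε ^ 2) * z.2.2) * (Gw (z.1, z.2.1) (1, 0) / (1 + v (z.1, z.2.1)))) * Fw z (1, 0, 0))) - ((((ε ^ 2) * z.2.2) * (Gw (z.1, z.2.1) (0, 1) / (1 + v (z.1, z.2.1)))) * Fw z (0, 1, 0)))) + (Φ z * (((((((((((ε ^ 2) * 2) * z.2.2) * ((Gw (z.1, z.2.1) (1, 0) ^ 2) + (Gw (z.1, z.2.1) (0, 1) ^ 2))) / (1 + v (z.1, z.2.1)) ^ 2) * Fw z (0, 0, 1)) + (((1 + (((ε ^ 2) * (z.2.2 ^ 2)) * ((Gw (z.1, z.2.1) (1, 0) ^ 2) + (Gw (z.1, z.2.1) (0, 1) ^ 2)))) / (1 +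 v (z.1, z.2.1)) ^ 2) * F2 z (0, 0, 1) (0, 0, 1))) - (((ε ^ 2) * (Gw (z.1, z.2.1) (1, 0) / (1 + v (z.1, z.2.1)))) * Fw z (1, 0, 0))) - ((((ε ^ 2) * z.2.2) * (Gw (z.1, z.2.1) (1, 0) / (1 + v (z.1, z.2.1)))) * F2 z (0, 0, 1) (1, 0, 0))) - (((ε ^ 2) * (Gw (z.1, z.2.1) (0, 1) / (1 + v (z.1, z.2.1)))) * Fw z (0, 1, 0))) - ((((ε ^ 2) * z.2.2) * (Gw (z.1, z.2.1) (0, 1) / (1 + v (z.1, z.2.1)))) * F2 z (0, 0, 1) (0, 1, 0)))))) := by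
    intro z hz
    have hq : (z.1, z.2.1) ∈ D := hz.1
    have hVpos : 0 < 1 + v (z.1, z.2.1) := by
      have := hv1 _ (subset_closure hq); linarith
    have hVne' : (1 + v (z.1, z.2.1)) ≠ 0 := ne_of_gt hVpos
    have e31 : F2 z (0, 0, 1) (1, 0, 0) = F2 z (1, 0, 0) (0, 0, 1) := hsymm z hz _ _
    have e32 : F2 z (0, 0, 1) (0, 1, 0) = F2 z (0, 1, 0) (0, 0, 1) := hsymm z hz _ _
    rw [e31, e32]
    field_simp
    ring
  have ig0 : IntegrableOn (fun z : ℝ × ℝ × ℝ => (Φ z * (((((((ε ^ 2) * F2 z (1, 0, 0) (1, 0, 0)) + ((ε ^ 2) * F2 z (0, 1, 0) (0, 1, 0))) - ((((2 * (ε ^ 2)) * z.2.2) * (Gw (z.1, z.2.1) (1, 0) / (1 + v (z.1, z.2.1)))) * F2 z (1, 0, 0) (0, 0, 1))) - ((((2 * (ε ^ 2)) * z.2.2) * (Gw (z.1, z.2.1) (0, 1) / (1 + v (z.1, z.2.1)))) * F2 z (0, 1, 0) (0, 0, 1))) + (((1 + (((ε ^ 2) * (z.2.2 ^ 2)) * ((Gw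 (z.1, z.2.1) (1, 0) ^ 2) + (Gw (z.1, z.2.1) (0, 1) ^ 2)))) / (1 + v (z.1, z.2.1)) ^ 2) * F2 z (0, 0, 1) (0, 0, 1))) + ((((ε ^ 2) * z.2.2) * (((2 * ((Gw (z.1, z.2.1) (1, 0) ^ 2) + (Gw (z.1, z.2.1) (0, 1) ^ 2))) / (1 + v (z.1, z.2.1)) ^ 2) - ((G2 (z.1, z.2.1) (1, 0) (1, 0) + G2 (z.1, z.2.1) (0, 1) (0, 1)) / (1 + v (z.1, z.2.1))))) * Fw z (0, 0, 1))))) (cyl D) volume := intg cg0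
  have ig1 : IntegrableOn (fun z : ℝ × ℝ × ℝ => ((Fw z (1, 0, 0) - ((z.2.2 * (Gw (z.1, z.2.1) (1, 0) / (1 + v (z.1, z.2.1)))) * Fw z (0, 0, 1))) ^ 2)) (cyl D) volume := intg cg1
  have ig2 : IntegrableOn (fun z : ℝ × ℝ × ℝ => ((Fw z (0, 1, 0) - ((z.2.2 * (Gw (z.1, z.2.1) (0, 1) / (1 + v (z.1, z.2.1)))) * Fw z (0, 0, 1))) ^ 2)) (cyl D) volume := intg cg2
  have ig3 : IntegrableOn (fun z : ℝ × ℝ × ℝ => ((Fw z (0, 0, 1) / (1 + v (z.1, z.2.1))) ^ 2)) (cyl D) volume := intg cg3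
  have ig4 : IntegrableOn (fun z : ℝ × ℝ × ℝ => (Φ z * (((Gw (z.1, z.2.1) (1, 0) / (1 + v (z.1, z.2.1))) * (Fw z (1, 0, 0) - ((z.2.2 * (Gw (z.1, z.2.1) (1, 0) / (1 + v (z.1, z.2.1)))) * Fw z (0, 0, 1)))) + ((Gw (z.1, z.2.1) (0, 1) / (1 + v (z.1, z.2.1))) * (Fw z (0, 1, 0) - ((z.2.2 * (Gw (z.1, z.2.1) (0, 1) / (1 + v (z.1, z.2.1)))) * Fw z (0, 0, 1))))))) (cyl D) volume := intg cg4
  have iHX : IntegrableOn (fun z : ℝ × ℝ × ℝ => ((Fw z (1, 0, 0) * (Fw z (1, 0, 0) - ((z.2.2 * (Gw (z.1, z.2.1) (1, 0) / (1 + v (z.1, z.2.1)))) * Fw z (0, 0, 1)))) + (Φ z * ((F2 z (1, 0, 0) (1, 0, 0) - ((z.2.2 * (((G2 (z.1, z.2.1) (1, 0) (1, 0) * (1 + v (z.1, z.2.1))) - (Gw (z.1, z.2.1) (1, 0) * Gw (z.1, z.2.1) (1, 0))) / (1 + v (z.1, z.2.1)) ^ 2)) * Fw z (0, 0, 1)))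 - ((z.2.2 * (Gw (z.1, z.2.1) (1, 0) / (1 + v (z.1, z.2.1)))) * F2 z (1, 0, 0) (0, 0, 1)))))) (cyl D) volume := intg cHX
  have iHY : IntegrableOn (fun z : ℝ × ℝ × ℝ => ((Fw z (0, 1, 0) * (Fw z (0, 1, 0) - ((z.2.2 * (Gw (z.1, z.2.1) (0, 1) / (1 + v (z.1, z.2.1)))) * Fw z (0, 0, 1)))) + (Φ z * ((F2 z (0, 1, 0) (0, 1, 0) - ((z.2.2 * (((G2 (z.1, z.2.1) (0, 1) (0, 1) * (1 + v (z.1, z.2.1))) - (Gw (z.1, z.2.1) (0, 1) * Gw (z.1, z.2.1) (0, 1))) / (1 + v (z.1, z.2.1)) ^ 2)) * Fw z (0, 0, 1))) - ((z.2.2 * (Gw (z.1, z.2.1) (0, 1) / (1 + v (z.1, z.2.1)))) * F2 z (0, 1, 0) (0, 0, 1)))))) (cyl D) volume := intg cHY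
  have iHZ : IntegrableOn (fun z : ℝ × ℝ × ℝ => ((Fw z (0, 0, 1) * (((((1 + (((ε ^ 2) * (z.2.2 ^ 2)) * ((Gw (z.1, z.2.1) (1, 0) ^ 2) + (Gw (z.1, z.2.1) (0, 1) ^ 2)))) / (1 + v (z.1, z.2.1)) ^ 2) * Fw z (0, 0, 1)) - ((((ε ^ 2) * z.2.2) * (Gw (z.1, z.2.1) (1, 0) / (1 + v (z.1, z.2.1)))) * Fw z (1, 0, 0))) - ((((ε ^ 2) * z.2.2) * (Gw (z.1, z.2.1) (0, 1) / (1 + v (z.1, z.2.1)))) * Fw z (0, 1, 0)))) + (Φ z * (((((((((((ε ^ 2) * 2) * z.2.2) * ((Gw (z.1, z.2.1) (1, 0) ^ 2) + (Gw (z.1, z.2.1) (0, 1) ^ 2))) / (1 + v (z.1, z.2.1)) ^ 2) * Fw z (0, 0, 1)) + (((1 + (((ε ^ 2) * (z.2.2 ^ 2)) * ((Gw (z.1, z.2.1) (1, 0) ^ 2) + (Gw (z.1, z.2.1) (0, 1) ^ 2)))) / (1 + v (z.1, z.2.1)) ^ 2) * F2 z (0, 0, 1) (0, 0, 1))) - (((ε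 ^ 2) * (Gw (z.1, z.2.1) (1, 0) / (1 + v (z.1, z.2.1)))) * Fw z (1, 0, 0))) - ((((ε ^ 2) * z.2.2) * (Gw (z.1, z.2.1) (1, 0) / (1 + v (z.1, z.2.1)))) * F2 z (0, 0, 1) (1, 0, 0))) - (((ε ^ 2) * (Gw (z.1, z.2.1) (0, 1) / (1 + v (z.1, z.2.1)))) * Fw z (0, 1, 0))) - ((((ε ^ 2) * z.2.2) * (Gw (z.1, z.2.1) (0, 1) / (1 + v (z.1, z.2.1)))) * F2 z (0, 0, 1) (0, 1, 0)))))) (cyl D) volume := intg cHZ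
  have jX : Integrable (fun z : ℝ × ℝ × ℝ => ε ^ 2 * ((Fw z (1, 0, 0) * (Fw z (1, 0, 0) - ((z.2.2 * (Gw (z.1, z.2.1) (1, 0) / (1 + v (z.1, z.2.1)))) * Fw z (0, 0, 1)))) + (Φ z * ((F2 z (1, 0, 0) (1, 0, 0) - ((z.2.2 * (((G2 (z.1, z.2.1) (1, 0) (1, 0) * (1 + v (z.1, z.2.1))) - (Gw (z.1, z.2.1) (1, 0) * Gw (z.1, z.2.1) (1, 0))) / (1 + v (z.1, z.2.1)) ^ 2)) * Fw z (0, 0, 1))) - ((z.2.2 * (Gw (z.1, z.2.1) (1, 0) / (1 + v (z.1, z.2.1)))) * F2 z (1, 0, 0) (0, 0, 1)))))) (volume.restrict (cyl D)) :=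
    iHX.const_mul _
  have jY : Integrable (fun z : ℝ × ℝ × ℝ => ε ^ 2 * ((Fw z (0, 1, 0) * (Fw z (0, 1, 0) - ((z.2.2 * (Gw (z.1, z.2.1) (0, 1) / (1 + v (z.1, z.2.1)))) * Fw z (0, 0, 1)))) + (Φ z * ((F2 z (0, 1, 0) (0, 1, 0) - ((z.2.2 * (((G2 (z.1, z.2.1) (0, 1) (0, 1) * (1 + v (z.1, z.2.1))) - (Gw (z.1, z.2.1) (0, 1) * Gw (z.1, z.2.1) (0, 1))) / (1 + v (z.1, z.2.1)) ^ 2)) * Fw z (0, 0, 1))) - ((z.2.2 * (Gw (z.1, z.2.1) (0, 1) / (1 + v (z.1, z.2.1)))) * F2 z (0, 1, 0) (0, 0, 1)))))) (volume.restrict (cyl D)) :=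
    iHY.const_mul _
  have jXY : Integrable (fun z : ℝ × ℝ × ℝ => ε ^ 2 * ((Fw z (1, 0, 0) * (Fw z (1, 0, 0) - ((z.2.2 * (Gw (z.1, z.2.1) (1, 0) / (1 + v (z.1, z.2.1)))) * Fw z (0, 0, 1)))) + (Φ z * ((F2 z (1, 0, 0) (1, 0, 0) - ((z.2.2 * (((G2 (z.1, z.2.1) (1, 0) (1, 0) * (1 + v (z.1, z.2.1))) - (Gw (z.1, z.2.1) (1, 0) * Gw (z.1, z.2.1) (1, 0))) / (1 + v (z.1, z.2.1)) ^ 2)) * Fw z (0, 0, 1))) - ((z.2.2 * (Gw (z.1, z.2.1) (1, 0) / (1 + v (z.1, z.2.1)))) * F2 z (1, 0, 0) (0, 0, 1))))) + ε ^ 2 * ((Fw z (0, 1, 0) * (Fw z (0, 1, 0) - ((z.2.2 * (Gw (z.1, z.2.1) (0, 1) / (1 + v (z.1, z.2.1)))) * Fw z (0, 0, 1)))) + (Φ z * ((F2 z (0, 1, 0) (0, 1, 0) - ((z.2.2 * (((G2 (z.1, z.2.1) (0, 1) (0, 1) * (1 + v (z.1, z.2.1))) - (Gw (z.1, z.2.1)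 (0, 1) * Gw (z.1, z.2.1) (0, 1))) / (1 + v (z.1, z.2.1)) ^ 2)) * Fw z (0, 0, 1))) - ((z.2.2 * (Gw (z.1, z.2.1) (0, 1) / (1 + v (z.1, z.2.1)))) * F2 z (0, 1, 0) (0, 0, 1))))))
      (volume.restrict (cyl D)) := jX.add jY
  have icomb : ∫ z in cyl D, ((Φ z * (((((((ε ^ 2) * F2 z (1, 0, 0) (1, 0, 0)) + ((ε ^ 2) * F2 z (0, 1, 0) (0, 1, 0))) - ((((2 * (ε ^ 2)) * z.2.2) * (Gw (z.1, z.2.1) (1, 0) / (1 + v (z.1, z.2.1)))) * F2 z (1, 0, 0) (0, 0, 1))) - ((((2 * (ε ^ 2)) * z.2.2) * (Gw (z.1, z.2.1) (0, 1) / (1 + v (z.1, z.2.1)))) * F2 z (0, 1, 0) (0, 0, 1))) + (((1 + (((ε ^ 2) * (z.2.2 ^ 2)) * ((Gw (z.1, z.2.1) (1, 0) ^ 2) + (Gw (z.1, z.2.1) (0, 1) ^ 2)))) / (1 + v (z.1, z.2.1)) ^ 2) * F2 z (0, 0, 1) (0, 0, 1))) + ((((ε ^ 2) * z.2.2) * (((2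 * ((Gw (z.1, z.2.1) (1, 0) ^ 2) + (Gw (z.1, z.2.1) (0, 1) ^ 2))) / (1 + v (z.1, z.2.1)) ^ 2) - ((G2 (z.1, z.2.1) (1, 0) (1, 0) + G2 (z.1, z.2.1) (0, 1) (0, 1)) / (1 + v (z.1, z.2.1))))) * Fw z (0, 0, 1)))) + ε ^ 2 * ((Fw z (1, 0, 0) - ((z.2.2 * (Gw (z.1, z.2.1) (1, 0) / (1 + v (z.1, z.2.1)))) * Fw z (0, 0, 1))) ^ 2) + ε ^ 2 * ((Fw z (0, 1, 0) - ((z.2.2 * (Gw (z.1, z.2.1) (0, 1) / (1 + v (z.1, z.2.1)))) * Fw z (0, 0, 1))) ^ 2) + ((Fw z (0, 0, 1) / (1 + v (z.1, z.2.1))) ^ 2) - ε ^ 2 * (Φ z * (((Gw (z.1, z.2.1) (1, 0) / (1 + v (z.1, z.2.1))) * (Fw z (1, 0, 0) - ((z.2.2 * (Gw (z.1, z.2.1) (1, 0) / (1 + v (z.1, z.2.1)))) * Fw z (0, 0, 1)))) + ((Gw (z.1, z.2.1) (0, 1) / (1 + v (z.1, z.2.1))) * (Fw z (0, 1, 0)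 - ((z.2.2 * (Gw (z.1, z.2.1) (0, 1) / (1 + v (z.1, z.2.1)))) * Fw z (0, 0, 1))))))) = 0 := by
    rw [setIntegral_congr_fun hΩo.measurableSet (fun z hz => halg z hz)]
    rw [integral_add jXY iHZ, integral_add jX jY,
      integral_const_mul, integral_const_mul, I1, I2, I3]
    ring
  have j1 : Integrable (fun z : ℝ × ℝ × ℝ => ε ^ 2 * ((Fw z (1, 0, 0) - ((z.2.2 * (Gw (z.1, z.2.1) (1, 0) / (1 + v (z.1, z.2.1)))) * Fw z (0, 0, 1))) ^ 2)) (volume.restrict (cyl D)) :=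
    ig1.const_mul _
  have j2 : Integrable (fun z : ℝ × ℝ × ℝ => ε ^ 2 * ((Fw z (0, 1, 0) - ((z.2.2 * (Gw (z.1, z.2.1) (0, 1) / (1 + v (z.1, z.2.1)))) * Fw z (0, 0, 1))) ^ 2)) (volume.restrict (cyl D)) :=
    ig2.const_mul _
  have j4 : Integrable (fun z : ℝ × ℝ × ℝ => ε ^ 2 * (Φ z * (((Gw (z.1, z.2.1) (1, 0) / (1 + v (z.1, z.2.1))) * (Fw z (1, 0, 0) - ((z.2.2 * (Gw (z.1, z.2.1) (1, 0) / (1 + v (z.1, z.2.1)))) * Fw z (0, 0, 1)))) + ((Gw (z.1, z.2.1) (0, 1) / (1 + v (z.1, z.2.1))) * (Fw z (0, 1, 0) - ((z.2.2 * (Gw (z.1, z.2.1) (0, 1) / (1 + v (z.1, z.2.1)))) * Fw z (0, 0, 1))))))) (volume.restrict (cyl D)) :=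
    ig4.const_mul _
  have j01 : Integrable (fun z : ℝ × ℝ × ℝ => (Φ z * (((((((ε ^ 2) * F2 z (1, 0, 0) (1, 0, 0)) + ((ε ^ 2) * F2 z (0, 1, 0) (0, 1, 0))) - ((((2 * (ε ^ 2)) * z.2.2) * (Gw (z.1, z.2.1) (1, 0) / (1 + v (z.1, z.2.1)))) * F2 z (1, 0, 0) (0, 0, 1))) - ((((2 * (ε ^ 2)) * z.2.2) * (Gw (z.1, z.2.1) (0, 1) / (1 + v (z.1, z.2.1)))) * F2 z (0, 1, 0) (0, 0, 1))) + (((1 + (((ε ^ 2) * (z.2.2 ^ 2)) * ((Gw (z.1, z.2.1) (1, 0) ^ 2) + (Gw (z.1, z.2.1) (0, 1) ^ 2)))) / (1 + v (z.1, z.2.1)) ^ 2) * F2 z (0, 0, 1) (0, 0, 1))) + ((((ε ^ 2) * z.2.2) * (((2 * ((Gw (z.1, z.2.1) (1, 0) ^ 2) + (Gw (z.1, z.2.1) (0, 1) ^ 2))) / (1 + v (z.1, z.2.1)) ^ 2) - ((G2 (z.1, z.2.1) (1, 0) (1, 0) + G2 (z.1, z.2.1) (0, 1) (0, 1)) / (1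 + v (z.1, z.2.1))))) * Fw z (0, 0, 1)))) + ε ^ 2 * ((Fw z (1, 0, 0) - ((z.2.2 * (Gw (z.1, z.2.1) (1, 0) / (1 + v (z.1, z.2.1)))) * Fw z (0, 0, 1))) ^ 2))
      (volume.restrict (cyl D)) := ig0.add j1
  have j012 : Integrable (fun z : ℝ × ℝ × ℝ => (Φ z * (((((((ε ^ 2) * F2 z (1, 0, 0) (1, 0, 0)) + ((ε ^ 2) * F2 z (0, 1, 0) (0, 1, 0))) - ((((2 * (ε ^ 2)) * z.2.2) * (Gw (z.1, z.2.1) (1, 0) / (1 + v (z.1, z.2.1)))) * F2 z (1, 0, 0) (0, 0, 1))) - ((((2 * (ε ^ 2)) * z.2.2) * (Gw (z.1, z.2.1) (0, 1) / (1 + v (z.1, z.2.1)))) * F2 z (0, 1, 0) (0, 0, 1))) + (((1 + (((ε ^ 2) * (z.2.2 ^ 2)) * ((Gw (z.1, z.2.1) (1, 0) ^ 2) + (Gw (z.1, z.2.1) (0, 1) ^ 2)))) / (1 + v (z.1, z.2.1)) ^ 2) * F2 z (0, 0, 1) (0, 0, 1))) + ((((ε ^ 2) * z.2.2) * (((2 *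 ((Gw (z.1, z.2.1) (1, 0) ^ 2) + (Gw (z.1, z.2.1) (0, 1) ^ 2))) / (1 + v (z.1, z.2.1)) ^ 2) - ((G2 (z.1, z.2.1) (1, 0) (1, 0) + G2 (z.1, z.2.1) (0, 1) (0, 1)) / (1 + v (z.1, z.2.1))))) * Fw z (0, 0, 1)))) + ε ^ 2 * ((Fw z (1, 0, 0) - ((z.2.2 * (Gw (z.1, z.2.1) (1, 0) / (1 + v (z.1, z.2.1)))) * Fw z (0, 0, 1))) ^ 2) + ε ^ 2 * ((Fw z (0, 1, 0) - ((z.2.2 * (Gw (z.1, z.2.1) (0, 1) / (1 + v (z.1, z.2.1)))) * Fw z (0, 0, 1))) ^ 2))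
      (volume.restrict (cyl D)) := j01.add j2
  have j0123 : Integrable (fun z : ℝ × ℝ × ℝ => (Φ z * (((((((ε ^ 2) * F2 z (1, 0, 0) (1, 0, 0)) + ((ε ^ 2) * F2 z (0, 1, 0) (0, 1, 0))) - ((((2 * (ε ^ 2)) * z.2.2) * (Gw (z.1, z.2.1) (1, 0) / (1 + v (z.1, z.2.1)))) * F2 z (1, 0, 0) (0, 0, 1))) - ((((2 * (ε ^ 2)) * z.2.2) * (Gw (z.1, z.2.1) (0, 1) / (1 + v (z.1, z.2.1)))) * F2 z (0, 1, 0) (0, 0, 1))) + (((1 + (((ε ^ 2) * (z.2.2 ^ 2)) * ((Gw (z.1, z.2.1) (1, 0) ^ 2) + (Gw (z.1, z.2.1) (0, 1) ^ 2)))) / (1 + v (z.1, z.2.1)) ^ 2) * F2 z (0, 0, 1) (0, 0, 1))) + ((((ε ^ 2) * z.2.2) * (((2 * ((Gw (z.1, z.2.1) (1, 0) ^ 2) + (Gw (z.1, z.2.1) (0, 1) ^ 2))) / (1 + v (z.1, z.2.1)) ^ 2) - ((G2 (z.1, z.2.1) (1, 0) (1, 0) + G2 (z.1, z.2.1) (0,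 1) (0, 1)) / (1 + v (z.1, z.2.1))))) * Fw z (0, 0, 1)))) + ε ^ 2 * ((Fw z (1, 0, 0) - ((z.2.2 * (Gw (z.1, z.2.1) (1, 0) / (1 + v (z.1, z.2.1)))) * Fw z (0, 0, 1))) ^ 2) + ε ^ 2 * ((Fw z (0, 1, 0) - ((z.2.2 * (Gw (z.1, z.2.1) (0, 1) / (1 + v (z.1, z.2.1)))) * Fw z (0, 0, 1))) ^ 2) + ((Fw z (0, 0, 1) / (1 + v (z.1, z.2.1))) ^ 2))
      (volume.restrict (cyl D)) := j012.add ig3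
  have isplit : ∫ z in cyl D, ((Φ z * (((((((ε ^ 2) * F2 z (1, 0, 0) (1, 0, 0)) + ((ε ^ 2) * F2 z (0, 1, 0) (0, 1, 0))) - ((((2 * (ε ^ 2)) * z.2.2) * (Gw (z.1, z.2.1) (1, 0) / (1 + v (z.1, z.2.1)))) * F2 z (1, 0, 0) (0, 0, 1))) - ((((2 * (ε ^ 2)) * z.2.2) * (Gw (z.1, z.2.1) (0, 1) / (1 + v (z.1, z.2.1)))) * F2 z (0, 1, 0) (0, 0, 1))) + (((1 + (((ε ^ 2) * (z.2.2 ^ 2)) * ((Gw (z.1, z.2.1) (1, 0) ^ 2) + (Gw (z.1, z.2.1) (0, 1) ^ 2)))) / (1 + v (z.1, z.2.1)) ^ 2) * F2 z (0, 0, 1) (0, 0, 1))) + ((((ε ^ 2) * z.2.2) * (((2 * ((Gw (z.1, z.2.1) (1, 0) ^ 2) + (Gw (z.1, z.2.1) (0, 1) ^ 2))) / (1 + v (z.1, z.2.1)) ^ 2) - ((G2 (z.1, z.2.1) (1, 0) (1, 0) + G2 (z.1, z.2.1) (0, 1) (0, 1)) / (1 + v (z.1, z.2.1))))) * Fw z (0,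 0, 1)))) + ε ^ 2 * ((Fw z (1, 0, 0) - ((z.2.2 * (Gw (z.1, z.2.1) (1, 0) / (1 + v (z.1, z.2.1)))) * Fw z (0, 0, 1))) ^ 2) + ε ^ 2 * ((Fw z (0, 1, 0) - ((z.2.2 * (Gw (z.1, z.2.1) (0, 1) / (1 + v (z.1, z.2.1)))) * Fw z (0, 0, 1))) ^ 2) + ((Fw z (0, 0, 1) / (1 + v (z.1, z.2.1))) ^ 2) - ε ^ 2 * (Φ z * (((Gw (z.1, z.2.1) (1, 0) / (1 + v (z.1, z.2.1))) * (Fw z (1, 0, 0) - ((z.2.2 * (Gw (z.1, z.2.1) (1, 0) / (1 + v (z.1, z.2.1)))) * Fw z (0, 0, 1)))) + ((Gw (z.1, z.2.1) (0, 1) / (1 + v (z.1, z.2.1))) * (Fw z (0, 1, 0) - ((z.2.2 * (Gw (z.1, z.2.1) (0, 1) / (1 + v (z.1, z.2.1)))) * Fw z (0, 0, 1)))))))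
      = (∫ z in cyl D, (Φ z * (((((((ε ^ 2) * F2 z (1, 0, 0) (1, 0, 0)) + ((ε ^ 2) * F2 z (0, 1, 0) (0, 1, 0))) - ((((2 * (ε ^ 2)) * z.2.2) * (Gw (z.1, z.2.1) (1, 0) / (1 + v (z.1, z.2.1)))) * F2 z (1, 0, 0) (0, 0, 1))) - ((((2 * (ε ^ 2)) * z.2.2) * (Gw (z.1, z.2.1) (0, 1) / (1 + v (z.1, z.2.1)))) * F2 z (0, 1, 0) (0, 0, 1))) + (((1 + (((ε ^ 2) * (z.2.2 ^ 2)) * ((Gw (z.1, z.2.1) (1, 0) ^ 2) + (Gw (z.1, z.2.1) (0, 1) ^ 2)))) / (1 + v (z.1, z.2.1)) ^ 2) * F2 z (0, 0, 1) (0, 0, 1))) + ((((ε ^ 2) * z.2.2) * (((2 * ((Gw (z.1, z.2.1) (1, 0) ^ 2) + (Gw (z.1, z.2.1) (0, 1) ^ 2))) / (1 + v (z.1, z.2.1)) ^ 2) - ((G2 (z.1, z.2.1) (1, 0) (1, 0) + G2 (z.1, z.2.1) (0, 1) (0, 1)) / (1 + v (z.1, z.2.1))))) * Fw z (0, 0,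 1))))) + ε ^ 2 * (∫ z in cyl D, ((Fw z (1, 0, 0) - ((z.2.2 * (Gw (z.1, z.2.1) (1, 0) / (1 + v (z.1, z.2.1)))) * Fw z (0, 0, 1))) ^ 2))
        + ε ^ 2 * (∫ z in cyl D, ((Fw z (0, 1, 0) - ((z.2.2 * (Gw (z.1, z.2.1) (0, 1) / (1 + v (z.1, z.2.1)))) * Fw z (0, 0, 1))) ^ 2)) + (∫ z in cyl D, ((Fw z (0, 0, 1) / (1 + v (z.1, z.2.1))) ^ 2))
        - ε ^ 2 * (∫ z in cyl D, (Φ z * (((Gw (z.1, z.2.1) (1, 0) / (1 + v (z.1, z.2.1))) * (Fw z (1, 0, 0) - ((z.2.2 * (Gw (z.1, z.2.1) (1, 0) / (1 + v (z.1, z.2.1)))) * Fw z (0, 0, 1)))) + ((Gw (z.1, z.2.1) (0, 1) / (1 + v (z.1, z.2.1))) * (Fw z (0, 1, 0) - ((z.2.2 * (Gw (z.1, z.2.1) (0, 1) / (1 + v (z.1, z.2.1)))) * Fw z (0, 0, 1))))))) := by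
    rw [integral_sub j0123 j4, integral_add j012 ig3, integral_add j01 j2,
      integral_add ig0 j1, integral_const_mul, integral_const_mul, integral_const_mul]
  have e0 : ∫ z in cyl D, Φ z * Lop ε v Φ z = ∫ z in cyl D, (Φ z * (((((((ε ^ 2) * F2 z (1, 0, 0) (1, 0, 0)) + ((ε ^ 2) * F2 z (0, 1, 0) (0, 1, 0))) - ((((2 * (ε ^ 2)) * z.2.2) * (Gw (z.1, z.2.1) (1, 0) / (1 + v (z.1, z.2.1)))) * F2 z (1, 0, 0) (0, 0, 1))) - ((((2 * (ε ^ 2)) * z.2.2) * (Gw (z.1, z.2.1) (0, 1) / (1 + v (z.1, z.2.1)))) * F2 z (0, 1, 0) (0, 0, 1))) + (((1 + (((ε ^ 2) * (z.2.2 ^ 2)) * ((Gw (z.1, z.2.1) (1, 0) ^ 2) + (Gw (z.1, z.2.1) (0, 1) ^ 2)))) / (1 + v (z.1, z.2.1)) ^ 2) * F2 z (0, 0, 1) (0, 0, 1))) + ((((ε ^ 2) * z.2.2) * (((2 * ((Gw (z.1, z.2.1) (1, 0) ^ 2) + (Gw (z.1, z.2.1) (0, 1) ^ 2))) / (1 +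 v (z.1, z.2.1)) ^ 2) - ((G2 (z.1, z.2.1) (1, 0) (1, 0) + G2 (z.1, z.2.1) (0, 1) (0, 1)) / (1 + v (z.1, z.2.1))))) * Fw z (0, 0, 1)))) :=
    setIntegral_congr_fun hΩo.measurableSet (fun z hz => hg0eq z hz)
  have e1 : ∫ z in cyl D, (Px z) ^ 2 = ∫ z in cyl D, ((Fw z (1, 0, 0) - ((z.2.2 * (Gw (z.1, z.2.1) (1, 0) / (1 + v (z.1, z.2.1)))) * Fw z (0, 0, 1))) ^ 2) :=
    setIntegral_congr_fun hΩo.measurableSet (fun z hz => hg1eq z hz)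
  have e2 : ∫ z in cyl D, (Py z) ^ 2 = ∫ z in cyl D, ((Fw z (0, 1, 0) - ((z.2.2 * (Gw (z.1, z.2.1) (0, 1) / (1 + v (z.1, z.2.1)))) * Fw z (0, 0, 1))) ^ 2) :=
    setIntegral_congr_fun hΩo.measurableSet (fun z hz => hg2eq z hz)
  have e3 : ∫ z in cyl D, (Pe z) ^ 2 = ∫ z in cyl D, ((Fw z (0, 0, 1) / (1 + v (z.1, z.2.1))) ^ 2) :=
    setIntegral_congr_fun hΩo.measurableSet (fun z hz => hg3eq z hz)
  have e4 : ∫ z in cyl D, Φ z * ((d1 v (z.1, z.2.1) / (1 + v (z.1, z.2.1))) * Px z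
      + (d2 v (z.1, z.2.1) / (1 + v (z.1, z.2.1))) * Py z) = ∫ z in cyl D, (Φ z * (((Gw (z.1, z.2.1) (1, 0) / (1 + v (z.1, z.2.1))) * (Fw z (1, 0, 0) - ((z.2.2 * (Gw (z.1, z.2.1) (1, 0) / (1 + v (z.1, z.2.1)))) * Fw z (0, 0, 1)))) + ((Gw (z.1, z.2.1) (0, 1) / (1 + v (z.1, z.2.1))) * (Fw z (0, 1, 0) - ((z.2.2 * (Gw (z.1, z.2.1) (0, 1) / (1 + v (z.1, z.2.1)))) * Fw z (0, 0, 1)))))) :=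
    setIntegral_congr_fun hΩo.measurableSet (fun z hz => hg4eq z hz)
  rw [e0, e1, e2, e3, e4]
  linarith [icomb, isplit]
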